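/- arXiv:1106.3938 — 11 statements merged into one kernel-verified Lean document; each statement's English description precedes it below -/
import Mathlib

section
/- Every partially ordered torsion-free abelian group (G, ≤) admits a compatible linear order extension: there exists a total order ≤ₗ on G making G a linearly ordered abelian group (x ≤ₗ y implies x + z ≤ₗ y + z for all z) such that a ≤ b implies a ≤ₗ b for all a, b ∈ G. -/
/-- Every partially ordered torsion-free abelian group admits a compatible
linear order extension. -/
theorem stmt1 {G : Type*} [AddCommGroup G]
    (htf : ∀ (n : ℤ) (g : G), n • g = 0 → n ≠ 0 → g = 0)
    (le : G → G → Prop) (hpo : IsPartialOrder G le)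
    (hcomp : ∀ a b c : G, le a b → le (a + c) (b + c)) :
    ∃ le' : G → G → Prop,
      IsLinearOrder G le' ∧
      (∀ a b c : G, le' a b → le' (a + c) (b + c)) ∧
      (∀ a b : G, le a b → le' a b) := by
  classical
  set C : Set G := {x | le 0 x} with hCdef
  have h0C : (0:G) ∈ C := hpo.refl 0
  have hCadd : ∀ a ∈ C, ∀ b ∈ C, a + b ∈ C := by
    intro a ha b hb
    have h1 : le b (a + b) := by simpa [add_comm] using hcomp 0 a b ha
    exact hpo.trans 0 b (a + b) hb h1
  have hCpt : ∀ a ∈ C, -a ∈ C → a = 0 := by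
    intro a ha hna
    have h1 : le a 0 := by simpa using hcomp 0 (-a) a hna
    exact hpo.antisymm a 0 h1 ha
  -- the collection of pointed cones containing C
  set Cones : Set (Set G) :=
    {S | C ⊆ S ∧ (∀ a ∈ S, ∀ b ∈ S, a + b ∈ S) ∧ (∀ a ∈ S, -a ∈ S → a = 0)} with hConesdef
  have hCcone : C ∈ Cones := ⟨subset_rfl, hCadd, hCpt⟩
  have hchains : ∀ c ⊆ Cones, IsChain (· ⊆ ·) c → c.Nonempty →
      ∃ ub ∈ Cones, ∀ s ∈ c, s ⊆ ub := by
    intro c hc hchain hne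
    refine ⟨⋃₀ c, ⟨?_, ?_, ?_⟩, fun s hs => Set.subset_sUnion_of_mem hs⟩
    · obtain ⟨s, hs⟩ := hne
      exact (hc hs).1.trans (Set.subset_sUnion_of_mem hs)
    · rintro a ⟨s, hs, has⟩ b ⟨t, ht, hbt⟩
      rcases hchain.total hs ht with h | h
      · exact ⟨t, ht, (hc ht).2.1 a (h has) b hbt⟩
      · exact ⟨s, hs, (hc hs).2.1 a has b (h hbt)⟩
    · rintro a ⟨s, hs, has⟩ ⟨t, ht, hat⟩
      rcases hchain.total hs ht with h | h
      · exact (hc ht).2.2 a (h has) hat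
      · exact (hc hs).2.2 a has (h hat)
  obtain ⟨M, hCM, hMmax⟩ := zorn_subset_nonempty Cones hchains C hCcone
  obtain ⟨hCM', hMadd, hMpt⟩ := hMmax.prop
  have h0M : (0:G) ∈ M := hCM' h0C
  -- natural multiples stay in M
  have hMsmul : ∀ (n : ℕ) (p : G), p ∈ M → (n : ℤ) • p ∈ M := by
    intro n
    induction n with
    | zero => intro p _; simpa using h0M
    | succ k ih =>
      intro p hp
      have h2 : ((k : ℤ) + 1) • p = (k : ℤ) • p + p := by
        rw [add_smul, one_smul]
      rw [Nat.cast_succ, h2]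
      exact hMadd _ (ih p hp) p hp
  -- key: if x ∉ M, then some positive multiple of x is the negative of an element of M
  have key : ∀ x : G, x ∉ M → ∃ p ∈ M, ∃ k : ℕ, 0 < k ∧ p + (k : ℤ) • x = 0 := by
    intro x hx
    set M' : Set G := {g | ∃ p ∈ M, ∃ n : ℕ, g = p + (n : ℤ) • x} with hM'def
    have hMM' : M ⊆ M' := fun p hp => ⟨p, hp, 0, by simp⟩
    have hxM' : x ∈ M' := ⟨0, h0M, 1, by simp⟩
    have hM'add : ∀ a ∈ M', ∀ b ∈ M', a + b ∈ M' := by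
      rintro a ⟨p, hp, m, rfl⟩ b ⟨q, hq, n, rfl⟩
      refine ⟨p + q, hMadd p hp q hq, m + n, ?_⟩
      push_cast
      rw [add_smul]
      abel
    by_contra hcon
    push_neg at hcon
    -- then M' is a pointed cone, contradicting maximality of M
    have hM'pt : ∀ a ∈ M', -a ∈ M' → a = 0 := by
      rintro a ⟨p, hp, m, rfl⟩ hna
      obtain ⟨q, hq, n, hqn⟩ := hna
      have hsum : (p + q) + ((m + n : ℕ) : ℤ) • x = 0 := by
        have h3 : (p + (m : ℤ) • x) + (q + (n : ℤ) • x) = 0 := by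
          rw [← hqn]; abel
        push_cast
        rw [add_smul]
        calc p + q + ((m : ℤ) • x + (n : ℤ) • x)
            = (p + (m : ℤ) • x) + (q + (n : ℤ) • x) := by abel
          _ = 0 := h3
      rcases Nat.eq_zero_or_pos (m + n) with h0 | hpos
      · obtain ⟨hm0, hn0⟩ := Nat.add_eq_zero.mp h0
        subst hm0; subst hn0
        simp only [Nat.cast_zero, zero_smul, add_zero, Nat.cast_ofNat] at hsum ⊢
        have hq' : q = -p := eq_neg_of_add_eq_zero_right (by simpa using hsum)
        refine hMpt p hp ?_
        rw [← hq']
        exact hq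
      · exact absurd hsum (hcon (p + q) (hMadd p hp q hq) (m + n) hpos)
    have hM'cone : M' ∈ Cones := ⟨hCM'.trans hMM', hM'add, hM'pt⟩
    exact hx (hMmax.2 hM'cone hMM' hxM')
  -- totality of M
  have htot : ∀ x : G, x ∈ M ∨ -x ∈ M := by
    intro x
    by_contra hcon
    push_neg at hcon
    obtain ⟨hx, hnx⟩ := hcon
    obtain ⟨p, hp, k, hk, hpk⟩ := key x hx
    obtain ⟨q, hq, l, hl, hql⟩ := key (-x) hnx
    have e1 : ((l : ℤ) * k) • x = -((l : ℤ) • p) := by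
      have h4 := congrArg (fun y => (l : ℤ) • y) hpk
      simp only [smul_add, smul_zero, smul_smul] at h4
      exact eq_neg_of_add_eq_zero_right h4
    have e2 : ((k : ℤ) * l) • x = (k : ℤ) • q := by
      have h5 := congrArg (fun y => (k : ℤ) • y) hql
      simp only [smul_add, smul_zero, smul_smul, smul_neg] at h5
      rw [← sub_eq_add_neg] at h5
      exact (sub_eq_zero.mp h5).symm
    have e3 : -((l : ℤ) • p) = (k : ℤ) • q := by
      rw [← e1, mul_comm, e2]
    have hlp0 : (l : ℤ) • p = 0 :=
      hMpt _ (hMsmul l p hp) (by rw [e3]; exact hMsmul k q hq)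
    have hp0 : p = 0 := htf l p hlp0 (by exact_mod_cast hl.ne')
    have hx0 : x = 0 := by
      refine htf k x ?_ (by exact_mod_cast hk.ne')
      rw [hp0, zero_add] at hpk
      exact hpk
    exact hx (hx0 ▸ h0M)
  -- the linear order
  refine ⟨fun a b => b - a ∈ M, ?_, ?_, ?_⟩
  · refine { refl := ?_, trans := ?_, antisymm := ?_, total := ?_ }
    · intro a; simpa using h0M
    · intro a b c hab hbc
      have h8 := hMadd _ hab _ hbc
      have h9 : (b - a) + (c - b) = c - a := by abel
      rwa [h9] at h8
    · intro a b hab hba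
      have h6 : b - a = 0 := hMpt _ hab (by simpa [neg_sub] using hba)
      exact (sub_eq_zero.mp h6).symm
    · intro a b
      rcases htot (b - a) with h | h
      · exact Or.inl h
      · exact Or.inr (by simpa [neg_sub] using h)
  · intro a b c hab
    simpa using hab
  · intro a b hab
    have h7 : le 0 (b - a) := by simpa [sub_eq_add_neg] using hcomp a b (-a) hab
    exact hCM' h7
end

section
/- Let (G, ≤) be a partially ordered torsion-free abelian group. Then the order relation ≤ is the intersection of all of its compatible linear order extensions (that is, for all g ∈ G one has 0 ≤ g if and only if 0 ≤ₗ g for every total order ≤ₗ on G making G a linearly ordered abelian group and extending ≤) if and only if ≤ is semiclosed. -/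
/-!
If `0 ≰ g`, adjoin `-g` to the positive cone `P` of `≤`: the set of `x` with `n • x + m • g ∈ P`
for some `n ≥ 1`, `m ≥ 0` is again a pointed semiclosed cone, precisely because `P` is semiclosed
(this is what keeps `g` out of it). By Zorn's lemma it lies in a maximal pointed semiclosed cone,
which is total since otherwise the same adjunction would enlarge it; this total cone is the
positive cone of a linear extension in which `g < 0`. Conversely, every compatible linear order
is semiclosed, since `a < 0` forces `n • a < 0`, and semiclosedness passes to intersections.
-/

section SemiclosedCone

variable {G : Type*} [AddCommGroup G]

structure IsSemiclosedCone (C : Set G) : Prop where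
  zero_mem : (0 : G) ∈ C
  add_mem {x y : G} : x ∈ C → y ∈ C → x + y ∈ C
  eq_zero_of_mem_of_neg_mem {x : G} : x ∈ C → -x ∈ C → x = 0
  mem_of_zsmul_mem {n : ℤ} {x : G} : 1 ≤ n → n • x ∈ C → x ∈ C

lemma IsSemiclosedCone.zsmul_mem {C : Set G} (hC : IsSemiclosedCone C) {k : ℤ} (hk : 0 ≤ k) {x : G} (hx : x ∈ C) :
    k • x ∈ C := by
  lift k to ℕ using hk
  induction k with
  | zero => simpa using hC.zero_mem
  | succ n ih => simpa [add_smul] using hC.add_mem ih hx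

def coneAdjoin (C : Set G) (h : G) : Set G :=
  {x | ∃ n : ℤ, 1 ≤ n ∧ ∃ m : ℤ, 0 ≤ m ∧ n • x - m • h ∈ C}

lemma subset_coneAdjoin (C : Set G) (h : G) : C ⊆ coneAdjoin C h :=
  fun x hx => ⟨1, le_rfl, 0, le_rfl, by simpa using hx⟩

lemma IsSemiclosedCone.mem_coneAdjoin_self {C : Set G} (hC : IsSemiclosedCone C) (h : G) :
    h ∈ coneAdjoin C h :=
  ⟨1, le_rfl, 1, zero_le_one, by simpa using hC.zero_mem⟩

lemma IsSemiclosedCone.coneAdjoin {C : Set G} (hC : IsSemiclosedCone C) {h : G} (hh : -h ∉ C) :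
    IsSemiclosedCone (coneAdjoin C h) where
  zero_mem := ⟨1, le_rfl, 0, le_rfl, by simpa using hC.zero_mem⟩
  add_mem := by
    rintro x y ⟨n, hn, m, hm, hx⟩ ⟨n', hn', m', hm', hy⟩
    refine ⟨n * n', one_le_mul_of_one_le_of_one_le hn hn', n' * m + n * m', by positivity, ?_⟩
    have hsum : (n * n') • (x + y) - (n' * m + n * m') • h
        = n' • (n • x - m • h) + n • (n' • y - m' • h) := by module
    rw [hsum]
    exact hC.add_mem (hC.zsmul_mem (by omega) hx) (hC.zsmul_mem (by omega) hy)
  eq_zero_of_mem_of_neg_mem := by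
    rintro x ⟨n, hn, m, hm, hx⟩ ⟨n', hn', m', hm', hnx⟩
    have hsum : (n' * m + n * m') • (-h)
        = n' • (n • x - m • h) + n • (n' • (-x) - m' • h) := by module
    have hmem : (n' * m + n * m') • (-h) ∈ C := by
      rw [hsum]
      exact hC.add_mem (hC.zsmul_mem (by omega) hx) (hC.zsmul_mem (by omega) hnx)
    -- semiclosedness of `C` and `-h ∉ C` force both multiplicities of `h` to vanish
    have hcoeff : n' * m + n * m' = 0 := by
      by_contra hne
      have hnonneg : 0 ≤ n' * m + n * m' := by positivity
      exact hh (hC.mem_of_zsmul_mem (by omega) hmem)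
    obtain rfl : m = 0 := by nlinarith
    obtain rfl : m' = 0 := by nlinarith
    simp only [zero_smul, sub_zero] at hx hnx
    exact hC.eq_zero_of_mem_of_neg_mem (hC.mem_of_zsmul_mem hn hx) (hC.mem_of_zsmul_mem hn' hnx)
  mem_of_zsmul_mem := by
    rintro k x hk ⟨n, hn, m, hm, hx⟩
    exact ⟨n * k, one_le_mul_of_one_le_of_one_le hn hk, m, hm, by rwa [mul_smul]⟩

lemma isSemiclosedCone_sUnion {c : Set (Set G)} (hc : ∀ C ∈ c, IsSemiclosedCone C)
    (hchain : IsChain (· ⊆ ·) c) (hne : c.Nonempty) : IsSemiclosedCone (⋃₀ c) where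
  zero_mem := let ⟨C, hC⟩ := hne; ⟨C, hC, (hc C hC).zero_mem⟩
  add_mem := by
    rintro x y ⟨C, hC, hx⟩ ⟨D, hD, hy⟩
    rcases hchain.total hC hD with hCD | hDC
    · exact ⟨D, hD, (hc D hD).add_mem (hCD hx) hy⟩
    · exact ⟨C, hC, (hc C hC).add_mem hx (hDC hy)⟩
  eq_zero_of_mem_of_neg_mem := by
    rintro x ⟨C, hC, hx⟩ ⟨D, hD, hnx⟩
    rcases hchain.total hC hD with hCD | hDC
    · exact (hc D hD).eq_zero_of_mem_of_neg_mem (hCD hx) hnx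
    · exact (hc C hC).eq_zero_of_mem_of_neg_mem hx (hDC hnx)
  mem_of_zsmul_mem := by
    rintro n x hn ⟨C, hC, hx⟩
    exact ⟨C, hC, (hc C hC).mem_of_zsmul_mem hn hx⟩

lemma IsSemiclosedCone.exists_total_superset {C : Set G} (hC : IsSemiclosedCone C) :
    ∃ D, C ⊆ D ∧ IsSemiclosedCone D ∧ ∀ x : G, x ∈ D ∨ -x ∈ D := by
  obtain ⟨D, hCD, hD, hmax⟩ := zorn_subset_nonempty {D : Set G | IsSemiclosedCone D}
    (fun c hc hchain hne => ⟨⋃₀ c, isSemiclosedCone_sUnion hc hchain hne,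
      fun _ => Set.subset_sUnion_of_mem⟩) C hC
  refine ⟨D, hCD, hD, fun x => or_iff_not_imp_right.2 fun hx => ?_⟩
  exact hmax (hD.coneAdjoin hx) (subset_coneAdjoin D x) (hD.mem_coneAdjoin_self x)

lemma IsSemiclosedCone.exists_total_superset_not_mem {C : Set G} (hC : IsSemiclosedCone C)
    {g : G} (hg : g ∉ C) :
    ∃ D, C ⊆ D ∧ IsSemiclosedCone D ∧ (∀ x : G, x ∈ D ∨ -x ∈ D) ∧ g ∉ D := by
  obtain ⟨D, hCD, hD, htotal⟩ :=
    (hC.coneAdjoin (h := -g) (by rwa [neg_neg])).exists_total_superset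
  have hngD : -g ∈ D := hCD (hC.mem_coneAdjoin_self (-g))
  refine ⟨D, (subset_coneAdjoin C (-g)).trans hCD, hD, htotal, fun hgD => hg ?_⟩
  rw [hD.eq_zero_of_mem_of_neg_mem hgD hngD]
  exact hC.zero_mem

section Relation

variable {r : G → G → Prop}

lemma rel_zero_sub_of_rel (hr : ∀ a b c : G, r a b → r (a + c) (b + c)) {a b : G} (hab : r a b) :
    r 0 (b - a) := by
  simpa [sub_eq_add_neg] using hr a b (-a) hab

lemma isSemiclosedCone_setOf_rel_zero (hpo : IsPartialOrder G r)
    (hr : ∀ a b c : G, r a b → r (a + c) (b + c))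
    (hsemi : ∀ (n : ℤ) (a : G), 1 ≤ n → r 0 (n • a) → r 0 a) :
    IsSemiclosedCone {x | r 0 x} where
  zero_mem := hpo.refl 0
  add_mem {x y} hx hy := hpo.trans _ _ _ hy (by simpa using hr 0 x y hx)
  eq_zero_of_mem_of_neg_mem {x} hx hnx := hpo.antisymm _ _ (by simpa using hr 0 (-x) x hnx) hx
  mem_of_zsmul_mem := hsemi _ _

lemma IsSemiclosedCone.isLinearOrder_sub_mem {D : Set G} (hD : IsSemiclosedCone D)
    (htotal : ∀ x : G, x ∈ D ∨ -x ∈ D) : IsLinearOrder G (fun a b => b - a ∈ D) where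
  refl a := by simpa using hD.zero_mem
  trans a b c hab hbc := by simpa using hD.add_mem hbc hab
  antisymm a b hab hba :=
    (sub_eq_zero.1 (hD.eq_zero_of_mem_of_neg_mem hab (by simpa using hba))).symm
  total a b := (htotal (b - a)).imp id (by simp)

lemma rel_zero_of_rel_zero_zsmul (hlin : IsLinearOrder G r)
    (hr : ∀ a b c : G, r a b → r (a + c) (b + c)) {n : ℤ} (hn : 1 ≤ n) {a : G}
    (hna : r 0 (n • a)) : r 0 a := by
  by_contra ha
  have ha0 : r a 0 := (hlin.total 0 a).resolve_left ha
  -- from `a ≤ 0` and `0 ≰ k • a`, adding `k • a` gives `(k + 1) • a ≤ k • a`, so `0 ≰ (k + 1) • a`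
  have hk : ∀ k : ℕ, ¬ r 0 ((k + 1 : ℤ) • a) := by
    intro k
    induction k with
    | zero => simpa using ha
    | succ k ih =>
      intro hk
      refine ih (hlin.trans _ _ _ hk ?_)
      simpa [add_smul, add_comm] using hr a 0 ((k + 1 : ℤ) • a) ha0
  obtain ⟨k, rfl⟩ : ∃ k : ℕ, n = k + 1 := ⟨(n - 1).toNat, by omega⟩
  exact hk k hna

end Relation

end SemiclosedCone

theorem stmt2_general {G : Type*} [AddCommGroup G]
    (le : G → G → Prop) (hpo : IsPartialOrder G le)
    (hcomp : ∀ a b c : G, le a b → le (a + c) (b + c)) :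
    (∀ g : G, le 0 g ↔
      (∀ le' : G → G → Prop, IsLinearOrder G le' →
        (∀ a b c : G, le' a b → le' (a + c) (b + c)) →
        (∀ a b : G, le a b → le' a b) → le' 0 g)) ↔
    (∀ (n : ℤ) (a : G), 1 ≤ n → le 0 (n • a) → le 0 a) := by
  constructor
  · intro hinter n a hn hna
    exact (hinter a).2 fun le' hlin hcomp' hext =>
      rel_zero_of_rel_zero_zsmul hlin hcomp' hn (hext _ _ hna)
  · intro hsemi g
    refine ⟨fun hg le' _ _ hext => hext _ _ hg, fun hall => ?_⟩
    by_contra hg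
    obtain ⟨D, hPD, hD, htotal, hgD⟩ :=
      (isSemiclosedCone_setOf_rel_zero hpo hcomp hsemi).exists_total_superset_not_mem hg
    have hext : ∀ a b : G, le a b → b - a ∈ D := fun a b hab => hPD (rel_zero_sub_of_rel hcomp hab)
    have hgD' := hall _ (hD.isLinearOrder_sub_mem htotal) (fun a b c hab => by simpa using hab) hext
    exact hgD (by simpa using hgD')

/-- For a partially ordered torsion-free abelian group (G, ≤), the order ≤
is the intersection of all of its compatible linear order extensions iff it is semiclosed. -/
theorem stmt2 {G : Type*} [AddCommGroup G]
    (htf : ∀ (n : ℤ) (g : G), n • g = 0 → n ≠ 0 → g = 0)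
    (le : G → G → Prop) (hpo : IsPartialOrder G le)
    (hcomp : ∀ a b c : G, le a b → le (a + c) (b + c)) :
    (∀ g : G, le 0 g ↔
      (∀ le' : G → G → Prop, IsLinearOrder G le' →
        (∀ a b c : G, le' a b → le' (a + c) (b + c)) →
        (∀ a b : G, le a b → le' a b) → le' 0 g)) ↔
    (∀ (n : ℤ) (a : G), 1 ≤ n → le 0 (n • a) → le 0 a) :=
  stmt2_general le hpo hcomp
end

section
/- Every torsion-free abelian group G admits an archimedean directed compatible order: there exists a partial order ≤ on G such that (i) a ≤ b implies a + c ≤ b + c for all c; (ii) every two elements of G have a common upper bound with respect to ≤; and (iii) for all a, b ∈ G, if n • a ≤ b holds for every integer n, then a = 0. -/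
/-!
A torsion-free abelian group `G` embeds into its divisible hull, a `ℚ`-vector space spanned by
the image of `G`, so it has a basis consisting of images of elements of `G`. Taking coordinates
gives an embedding `φ : G →+ (ι →₀ ℚ)` whose image contains every `single i 1`, and we order `G`
by pulling back the coordinatewise order. It is archimedean because `ℚ` is, and directed because
every vector is dominated by one with natural-number coordinates, which lies in the image of `φ`.
-/

open Finsupp

theorem eq_zero_of_forall_zsmul_le {α : Type*} [AddCommGroup α] [LinearOrder α]
    [IsOrderedAddMonoid α] [Archimedean α] {a b : α} (h : ∀ n : ℤ, n • a ≤ b) : a = 0 := by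
  by_contra ha
  have habs : 0 < |a| := abs_pos.mpr ha
  obtain ⟨n, hn⟩ := Archimedean.arch (b + |a|) habs
  obtain ⟨m, hm⟩ : ∃ m : ℤ, m • a = n • |a| := by
    rcases abs_choice a with h | h
    · exact ⟨n, by rw [h, natCast_zsmul]⟩
    · exact ⟨-n, by rw [h, neg_zsmul, natCast_zsmul, smul_neg]⟩
  exact (lt_add_of_pos_right b habs).not_ge (hn.trans (hm ▸ h m))

theorem Finsupp.eq_zero_of_forall_zsmul_le {ι α : Type*} [AddCommGroup α] [LinearOrder α]
    [IsOrderedAddMonoid α] [Archimedean α] {x y : ι →₀ α} (h : ∀ n : ℤ, n • x ≤ y) : x = 0 :=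
  Finsupp.ext fun i => _root_.eq_zero_of_forall_zsmul_le fun n => h n i

theorem Function.Injective.isPartialOrder_comap {α β : Type*} [PartialOrder β] {f : α → β}
    (hf : Function.Injective f) : IsPartialOrder α (fun a b => f a ≤ f b) where
  refl _ := le_rfl
  trans _ _ _ := le_trans
  antisymm _ _ hab hba := hf (le_antisymm hab hba)

theorem Finsupp.exists_le_mapRange_natCast {ι : Type*} (x : ι →₀ ℚ) :
    ∃ w : ι →₀ ℕ, x ≤ w.mapRange (↑) Nat.cast_zero :=
  ⟨x.mapRange (⌈·⌉₊) Nat.ceil_zero, fun i => by simpa using Nat.le_ceil (x i)⟩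

theorem AddSubgroup.mapRange_natCast_mem {ι : Type*} {H : AddSubgroup (ι →₀ ℚ)}
    (hH : ∀ i, Finsupp.single i 1 ∈ H) (w : ι →₀ ℕ) : w.mapRange (↑) Nat.cast_zero ∈ H := by
  induction w using Finsupp.induction with
  | zero => exact mapRange_zero (f := ((↑) : ℕ → ℚ)) ▸ H.zero_mem
  | single_add i n w _ _ hw =>
    rw [mapRange_add Nat.cast_add, mapRange_single, ← nsmul_one, ← smul_single]
    exact H.add_mem (H.nsmul_mem (hH i) n) hw

theorem AddMonoidHom.exists_le_of_single_mem_range {G ι : Type*} [AddCommGroup G]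
    (φ : G →+ (ι →₀ ℚ)) (hφ : ∀ i, Finsupp.single i 1 ∈ φ.range) (a b : G) :
    ∃ c, φ a ≤ φ c ∧ φ b ≤ φ c := by
  obtain ⟨v, hv⟩ := (φ a).exists_le_mapRange_natCast
  obtain ⟨w, hw⟩ := (φ b).exists_le_mapRange_natCast
  obtain ⟨c, hc⟩ := AddSubgroup.mapRange_natCast_mem hφ (v + w)
  have hnonneg (u : ι →₀ ℕ) : 0 ≤ u.mapRange ((↑) : ℕ → ℚ) Nat.cast_zero :=
    fun i => by simp
  rw [mapRange_add Nat.cast_add] at hc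
  exact ⟨c, hc ▸ hv.trans (le_add_of_nonneg_right (hnonneg w)),
    hc ▸ hw.trans (le_add_of_nonneg_left (hnonneg v))⟩

theorem DivisibleHull.span_range_coe (G : Type*) [AddCommGroup G] :
    Submodule.span ℚ (Set.range ((↑) : G → DivisibleHull G)) = ⊤ := by
  refine Submodule.eq_top_iff'.mpr fun x => ?_
  induction x with | mk m s
  have : (s : ℚ) • mk m s = ↑m := by
    rw [Nat.cast_smul_eq_nsmul, nsmul_mk]
    exact mk_eq_mk.mpr ⟨1, by simp⟩
  rw [← Submodule.smul_mem_iff _ (Nat.cast_ne_zero.mpr s.ne_zero : ((s : ℕ) : ℚ) ≠ 0), this]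
  exact Submodule.subset_span ⟨m, rfl⟩

universe u

theorem AddCommGroup.exists_injective_finsupp_rat (G : Type u) [AddCommGroup G]
    [IsAddTorsionFree G] :
    ∃ (ι : Type u) (φ : G →+ (ι →₀ ℚ)),
      Function.Injective φ ∧ ∀ i, Finsupp.single i 1 ∈ φ.range := by
  let B := Module.Basis.ofSpan (DivisibleHull.span_range_coe G).ge
  refine ⟨_, B.repr.toLinearMap.toAddMonoidHom.comp (DivisibleHull.coeAddMonoidHom G),
    B.repr.injective.comp DivisibleHull.coe_injective, fun i => ?_⟩
  obtain ⟨g, hg⟩ := Module.Basis.ofSpan_subset (DivisibleHull.span_range_coe G).ge ⟨i, rfl⟩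
  exact ⟨g, (congrArg B.repr hg).trans (B.repr_self i)⟩

/-- Every torsion-free abelian group admits an archimedean directed
compatible partial order. -/
theorem stmt3 {G : Type*} [AddCommGroup G]
    (htf : ∀ (n : ℤ) (g : G), n • g = 0 → n ≠ 0 → g = 0) :
    ∃ le : G → G → Prop,
      IsPartialOrder G le ∧
      (∀ a b c : G, le a b → le (a + c) (b + c)) ∧
      (∀ a b : G, ∃ c : G, le a c ∧ le b c) ∧
      (∀ a b : G, (∀ n : ℤ, le (n • a) b) → a = 0) := by
  have : Module.IsTorsionFree ℤ G :=
    .of_smul_eq_zero fun n g h => or_iff_not_imp_left.mpr (htf n g h)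
  have : IsAddTorsionFree G := .of_isTorsionFree ℤ G
  obtain ⟨ι, φ, hφ, hsingle⟩ := AddCommGroup.exists_injective_finsupp_rat G
  refine ⟨fun a b => φ a ≤ φ b, hφ.isPartialOrder_comap, fun a b c h => ?_,
    φ.exists_le_of_single_mem_range hsingle, fun a b h => ?_⟩
  · simpa only [map_add] using add_le_add_left h (φ c)
  · exact hφ (map_zero φ ▸ Finsupp.eq_zero_of_forall_zsmul_le fun n => by
      simpa only [map_zsmul] using h n)
end

section
/- Let G be a torsion-free abelian group and E ⊆ G a maximal independent set in G. Then there exists an injective additive group homomorphism φ : G → ⊕_E ℚ (the group of finitely supported functions E → ℚ) such that φ(a) is the unit vector e_a for every a ∈ E, namely the map sending g to p/q where q • g = Σ_{a ∈ E} p(a) • a with q a positive integer and p : E → ℤ finitely supported. -/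
def MaxIndependent {G : Type*} [AddCommGroup G] (E : Set G) : Prop :=
  LinearIndependent ℤ (fun a : E => (a : G)) ∧
  ∀ E' : Set G, E ⊆ E' → LinearIndependent ℤ (fun a : E' => (a : G)) → E' = E

/-! Independence of `E` makes `p ↦ Σ p a • a` an embedding of `⊕_E ℤ` into `G`, and maximality
puts a nonzero multiple of every `g` into its image. Since `⊕_E ℚ` is divisible, it is an
injective `ℤ`-module (Baer's criterion), so the inclusion `⊕_E ℤ → ⊕_E ℚ` extends to some
`φ : G →+ ⊕_E ℚ`. A relation `q • g = Σ p a • a` then forces `q • φ g = p`, which is the formula,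
and `φ g = 0` forces `p = 0`, hence `q • g = 0` and `g = 0` by torsion-freeness. -/

theorem LinearIndepOn.exists_smul_mem_span_of_maximal {R M : Type*} [Ring R] [Nontrivial R]
    [AddCommGroup M] [Module R M] {s : Set M} (hs : LinearIndepOn R id s)
    (hmax : ∀ t, s ⊆ t → LinearIndepOn R id t → t = s) (x : M) :
    ∃ r : R, r ≠ 0 ∧ r • x ∈ Submodule.span R s := by
  by_contra! h
  have hx : insert x s = s := hmax _ (Set.subset_insert x s) (hs.id_insert' fun r hr => by
    by_contra hr0; exact h r hr0 hr)
  exact h 1 one_ne_zero (by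
    rw [one_smul]; exact Submodule.subset_span (hx ▸ Set.mem_insert x s))

theorem MaxIndependent.exists_zsmul_eq_sum {G : Type*} [AddCommGroup G] {E : Set G}
    (hE : MaxIndependent E) (g : G) :
    ∃ n : ℤ, n ≠ 0 ∧ ∃ p : E →₀ ℤ, (p.sum fun a k => k • (a : G)) = n • g := by
  obtain ⟨n, hn, hng⟩ := LinearIndepOn.exists_smul_mem_span_of_maximal hE.1 hE.2 g
  rw [← Subtype.range_coe (s := E), Finsupp.mem_span_range_iff_exists_finsupp] at hng
  exact ⟨n, hn, hng⟩

theorem Module.Baer.int_of_module_rat (V : Type*) [AddCommGroup V] [Module ℚ V] :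
    Module.Baer ℤ V :=
  letI : DivisibleBy V ℤ := divisibleByOfSMulRightSurj V ℤ fun {n} hn x =>
    ⟨(n : ℚ)⁻¹ • x, by
      show n • ((n : ℚ)⁻¹ • x) = x
      rw [← Int.cast_smul_eq_zsmul ℚ, smul_smul, mul_inv_cancel₀ (by exact_mod_cast hn), one_smul]⟩
  Module.Baer.of_divisible V

theorem AddMonoidHom.injective_of_comp_eq_of_exists_zsmul_mem_range {A G V : Type*}
    [AddCommGroup A] [AddCommGroup G] [AddCommGroup V]
    (htf : ∀ (n : ℤ) (g : G), n • g = 0 → n ≠ 0 → g = 0)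
    {T : A →+ G} {ι : A →+ V} {φ : G →+ V} (hφ : φ.comp T = ι) (hι : Function.Injective ι)
    (hT : ∀ g, ∃ n : ℤ, n ≠ 0 ∧ n • g ∈ T.range) : Function.Injective φ := by
  refine (injective_iff_map_eq_zero φ).mpr fun g hg => ?_
  obtain ⟨n, hn, p, hp⟩ := hT g
  have hp0 : p = 0 := hι <| by
    rw [map_zero, ← hφ, AddMonoidHom.comp_apply, hp, map_zsmul, hg, smul_zero]
  exact htf n g (by rw [← hp, hp0, map_zero]) hn

/-- a torsion-free abelian group with maximal independent set `E` embeds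
into `⊕_E ℚ` via `g ↦ p / q` where `q • g = Σ_{a ∈ E} p a • a`, sending each `a ∈ E`
to the unit vector `e_a`. -/
theorem stmt6 {G : Type*} [AddCommGroup G]
    (htf : ∀ (n : ℤ) (g : G), n • g = 0 → n ≠ 0 → g = 0)
    (E : Set G) (hE : MaxIndependent E) :
    ∃ φ : G →+ (E →₀ ℚ),
      Function.Injective φ ∧
      (∀ a : E, φ (a : G) = Finsupp.single a 1) ∧
      (∀ (g : G) (q : ℕ) (p : E →₀ ℤ), 0 < q →
        q • g = (p.sum fun a n => n • (a : G)) →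
        ∀ a : E, φ g a = (p a : ℚ) / (q : ℚ)) := by
  let T : (E →₀ ℤ) →+ G := (Finsupp.linearCombination ℤ ((↑) : E → G)).toAddMonoidHom
  let ι : (E →₀ ℤ) →+ (E →₀ ℚ) := Finsupp.mapRange.addMonoidHom (Int.castAddHom ℚ)
  obtain ⟨φ, hφ⟩ := (Module.Baer.int_of_module_rat (E →₀ ℚ)).extension_property_addMonoidHom
    T hE.1 ι
  have hφT (p : E →₀ ℤ) : φ (p.sum fun a n => n • (a : G)) = ι p := by
    rw [← Finsupp.linearCombination_apply]; exact DFunLike.congr_fun hφ p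
  refine ⟨φ, ?_, fun a => ?_, fun g q p hq hqg a => ?_⟩
  · have hι : Function.Injective ι := Finsupp.mapRange_injective _ Int.cast_zero Int.cast_injective
    refine AddMonoidHom.injective_of_comp_eq_of_exists_zsmul_mem_range htf hφ hι fun g => ?_
    obtain ⟨n, hn, p, hp⟩ := hE.exists_zsmul_eq_sum g
    exact ⟨n, hn, p, (Finsupp.linearCombination_apply _ _).trans hp⟩
  · simpa [ι] using hφT (Finsupp.single a 1)
  · have h := DFunLike.congr_fun (hφT p) a
    rw [← hqg, map_nsmul, Finsupp.smul_apply, nsmul_eq_mul] at h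
    rw [eq_div_iff (by exact_mod_cast hq.ne'), mul_comm, h]
    rfl
end

section
/- Let (G, ≤) be a partially ordered torsion-free abelian group. Define a relation ≤′ on G by 0 ≤′ g iff there exists an integer m ≥ 1 with 0 ≤ m • g (and g ≤′ h iff 0 ≤′ h − g). Then ≤′ is a partial order making G a partially ordered group, ≤′ is semiclosed, ≤′ extends ≤, and every total po-group order on G extending ≤ also extends ≤′. -/
/-- Helper: in a translation-invariant preorder, positives are closed under addition,
hence under natural scalar multiples. -/
lemma stmt8_aux {G : Type*} [AddCommGroup G] (le : G → G → Prop)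
    (hrefl : ∀ a, le a a) (htrans : ∀ a b c, le a b → le b c → le a c)
    (hcomp : ∀ a b c : G, le a b → le (a + c) (b + c)) :
    ∀ (k : ℕ) (x : G), le 0 x → le 0 (k • x) := by
  intro k x hx
  induction k with
  | zero => simpa using hrefl 0
  | succ n ih =>
      have h1 : le (n • x) (n • x + x) := by
        have := hcomp 0 x (n • x) hx
        simpa [add_comm] using this
      have := htrans _ _ _ ih h1
      simpa [succ_nsmul] using this

lemma stmt8_aux_int {G : Type*} [AddCommGroup G] (le : G → G → Prop)
    (hrefl : ∀ a, le a a) (htrans : ∀ a b c, le a b → le b c → le a c)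
    (hcomp : ∀ a b c : G, le a b → le (a + c) (b + c)) :
    ∀ (m : ℤ) (x : G), 1 ≤ m → le 0 x → le 0 (m • x) := by
  intro m x hm hx
  have : m • x = m.toNat • x := by
    conv_lhs => rw [← Int.toNat_of_nonneg (show (0:ℤ) ≤ m by omega)]
    exact natCast_zsmul x m.toNat
  rw [this]
  exact stmt8_aux le hrefl htrans hcomp m.toNat x hx

/-- the relation `0 ≤′ g ⟺ ∃ m ≥ 1, 0 ≤ m • g` is a semiclosed po-group
order extending ≤, and every total po-group order extending ≤ also extends ≤′. -/
theorem stmt8 {G : Type*} [AddCommGroup G]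
    (htf : ∀ (n : ℤ) (g : G), n • g = 0 → n ≠ 0 → g = 0)
    (le : G → G → Prop) (hpo : IsPartialOrder G le)
    (hcomp : ∀ a b c : G, le a b → le (a + c) (b + c)) :
    let le' : G → G → Prop := fun g h => ∃ m : ℤ, 1 ≤ m ∧ le 0 (m • (h - g))
    IsPartialOrder G le' ∧
    (∀ a b c : G, le' a b → le' (a + c) (b + c)) ∧
    (∀ (n : ℤ) (g : G), 1 ≤ n → le' 0 (n • g) → le' 0 g) ∧
    (∀ a b : G, le a b → le' a b) ∧
    (∀ L : G → G → Prop, IsLinearOrder G L →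
      (∀ a b c : G, L a b → L (a + c) (b + c)) →
      (∀ a b : G, le a b → L a b) →
      ∀ a b : G, le' a b → L a b) := by
  intro le'
  have hrefl := hpo.refl
  have htrans : ∀ a b c, le a b → le b c → le a c := fun a b c => hpo.trans a b c
  have hanti : ∀ a b, le a b → le b a → a = b := fun a b => hpo.antisymm a b
  have hscale := stmt8_aux_int le hrefl htrans hcomp
  -- addition of nonnegatives
  have hadd : ∀ x y : G, le 0 x → le 0 y → le 0 (x + y) := by
    intro x y hx hy
    have h1 : le y (x + y) := by simpa [add_comm] using hcomp 0 x y hx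
    exact htrans _ _ _ hy h1
  refine ⟨{ refl := fun a => ⟨1, le_refl 1, by simpa using hrefl 0⟩,
            trans := fun a b c hab hbc => ?_,
            antisymm := fun a b hab hba => ?_ }, ?_, ?_, ?_, ?_⟩
  · obtain ⟨m, hm, hmle⟩ := hab
    obtain ⟨n, hn, hnle⟩ := hbc
    refine ⟨m * n, one_le_mul_of_one_le_of_one_le hm hn, ?_⟩
    have h1 : le 0 (n • (m • (b - a))) := hscale n _ hn hmle
    have h2 : le 0 (m • (n • (c - b))) := hscale m _ hm hnle
    have := hadd _ _ h1 h2
    have heq : n • m • (b - a) + m • n • (c - b) = (m * n) • (c - a) := by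
      rw [smul_comm n m, ← smul_add, ← smul_add, mul_smul]
      congr 2
      abel
    rwa [heq] at this
  · obtain ⟨m, hm, hmle⟩ := hab
    obtain ⟨n, hn, hnle⟩ := hba
    have h1 : le 0 (n • (m • (b - a))) := hscale n _ hn hmle
    have h2 : le 0 (m • (n • (a - b))) := hscale m _ hm hnle
    have heq : m • n • (a - b) = -(n • m • (b - a)) := by
      rw [smul_comm m n, ← smul_neg, ← smul_neg, neg_sub]
    rw [heq] at h2
    have h3 : le (n • m • (b - a)) 0 := by
      have := hcomp 0 (-(n • m • (b - a))) (n • m • (b - a)) h2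
      simpa using this
    have h0 : n • m • (b - a) = 0 := hanti _ _ h3 h1
    have : b - a = 0 := htf (n * m) (b - a) (by rwa [mul_smul]) (by positivity)
    have : a = b := by linear_combination (norm := abel) -this
    exact this
  · -- compatibility
    intro a b c hab
    obtain ⟨m, hm, hmle⟩ := hab
    exact ⟨m, hm, by simpa using hmle⟩
  · -- semiclosed
    intro n g hn hng
    obtain ⟨m, hm, hmle⟩ := hng
    refine ⟨m * n, one_le_mul_of_one_le_of_one_le hm hn, ?_⟩
    rw [mul_smul]
    simpa using hmle
  · -- extends le
    intro a b hab
    refine ⟨1, le_refl 1, ?_⟩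
    have := hcomp a b (-a) hab
    simpa [sub_eq_add_neg] using this
  · -- total orders extending le extend le'
    intro L hL hLcomp hLle a b hab
    obtain ⟨m, hm, hmle⟩ := hab
    by_cases hab' : a = b
    · subst hab'; exact hL.refl a
    · rcases hL.total a b with h | h
      · exact h
      · exfalso
        have h0 : L 0 (a - b) := by
          have := hLcomp b a (-b) h
          simpa [sub_eq_add_neg] using this
        have hLrefl : ∀ x, L x x := hL.refl
        have hLtrans : ∀ a b c, L a b → L b c → L a c := fun a b c => hL.trans a b c
        have h1 : L 0 (m • (a - b)) := stmt8_aux_int L hLrefl hLtrans hLcomp m _ hm h0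
        have h2 : L 0 (m • (b - a)) := hLle _ _ hmle
        have heq : m • (a - b) = -(m • (b - a)) := by rw [← smul_neg, neg_sub]
        rw [heq] at h1
        have h3 : L (m • (b - a)) 0 := by
          have := hLcomp 0 (-(m • (b - a))) (m • (b - a)) h1
          simpa using this
        have h0' : m • (b - a) = 0 := hL.antisymm _ _ h3 h2
        have : b - a = 0 := htf m _ h0' (by omega)
        exact hab' (by linear_combination (norm := abel) -this)
end

section
/- Let E be a set, let ι : ⊕_E ℤ → ⊕_E ℝ be the natural embedding of finitely supported integer-valued functions into the real vector space of finitely supported functions E → ℝ, and let P ⊆ ⊕_E ℤ satisfy: P + P ⊆ P, P ∩ (−P) = {0}, and n • x ∈ P for some integer n ≥ 1 implies x ∈ P (i.e. P is the positive cone of a semiclosed po-group order on ⊕_E ℤ). Let C := convexHull_ℝ (ι '' P). Then C equals the set of all finite nonnegative real linear combinations of elements of ι '' P, C + C ⊆ C, α • C ⊆ C for every real α ≥ 0, C ∩ (−C) = {0}, and C ∩ ι''(⊕_E ℤ) = ι '' P. In particular, the assignment P ↦ convexHull_ℝ (ι '' P) is an injective map from semiclosed po-group positive cones on ⊕_E ℤ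 to vector-space positive cones on ⊕_E ℝ. -/
/-!
Since `P` is an additive submonoid, the convex hull `C` of `ι '' P` is closed under addition and
under scaling by any `t ≥ 0` (write `t • x = (t / n) • (n • x)` with `n ≥ t`), so it is the conical
hull of `ι '' P`. The heart of the matter is `C ∩ range ι = ι '' P`. If `ι z = ∑ cᵢ • ι pᵢ` with
`cᵢ ≥ 0` and `pᵢ ∈ P`, choose a `ℚ`-linear `f : ℝ → ℚ` which is positive at `1` and at every
positive `cᵢ`: on the finitely many Hamel coordinates involved, positivity is an open condition
satisfied by the true basis vectors, and rational points are dense. Applying `f` coordinatewise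
and clearing denominators yields `N • z = ∑ nᵢ • pᵢ` with `N ≥ 1` and `nᵢ ∈ ℕ`, so `z ∈ P` by
semiclosedness. Salience follows: if `x = ∑ cᵢ • ι pᵢ` and `-x` lie in `C`, then `-ι pᵢ ∈ C`
whenever `cᵢ > 0`, hence `-pᵢ ∈ P` and `pᵢ = 0`. Injectivity holds because `P = ι⁻¹ C`.
-/

theorem exists_linearMap_rat_pos (s : Finset ℝ) :
    ∃ f : ℝ →ₗ[ℚ] ℚ, ∀ x ∈ s, 0 < x → 0 < f x := by
  classical
  let b := Module.Basis.ofVectorSpace ℚ ℝ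
  let J := s.sup fun x => (b.repr x).support
  -- on `s`, `F r` is the `ℚ`-linear map `b j ↦ r j` (`j ∈ J`), provided `r` is rational
  let F : (J → ℝ) → ℝ → ℝ := fun r x => ∑ j : J, (b.repr x j : ℝ) * r j
  have hF : ∀ x ∈ s, F (fun j => b j) x = x := by
    intro x hx
    conv_rhs => rw [← b.linearCombination_repr x, Finsupp.linearCombination_apply, Finsupp.sum]
    show ∑ j : J, (b.repr x j : ℝ) * b j = _
    rw [Finset.sum_coe_sort J (fun j => (b.repr x j : ℝ) * b j)]
    refine (Finset.sum_subset (Finset.le_sup (f := fun x => (b.repr x).support) hx) ?_).symm.trans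
      ?_
    · intro j _ hj
      simp [Finsupp.notMem_support_iff.mp hj]
    · simp [Rat.smul_def]
  have hU : IsOpen {r : J → ℝ | ∀ x ∈ s, 0 < x → 0 < F r x} := by
    simp only [Set.ofPred_forall]
    exact isOpen_biInter_finset fun x _ => isOpen_iInter_of_finite fun _ =>
      isOpen_lt continuous_const (by fun_prop)
  obtain ⟨r, hr⟩ := (DenseRange.piMap fun _ => Rat.denseRange_cast).exists_mem_open hU
    ⟨_, fun x hx hx0 => (hF x hx).symm ▸ hx0⟩
  refine ⟨∑ j : J, r j • b.coord j, fun x hx hx0 => ?_⟩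
  have hrx := hr x hx hx0
  simp only [F, Pi.map_apply] at hrx
  exact_mod_cast (by simpa [mul_comm] using hrx : (0 : ℝ) < ((∑ j : J, r j • b.coord j) x : ℚ))

theorem Rat.den_natCast_mul_eq_one {q : ℚ} {N : ℕ} (h : q.den ∣ N) : ((N : ℚ) * q).den = 1 := by
  obtain ⟨k, rfl⟩ := h
  rw [Nat.cast_mul, mul_comm (q.den : ℚ), mul_assoc, Rat.den_mul_eq_num]
  simpa using Rat.den_intCast ((k : ℤ) * q.num)

theorem exists_linearMap_rat_pos_den_eq_one (s : Finset ℝ) :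
    ∃ f : ℝ →ₗ[ℚ] ℚ, ∀ x ∈ s, (0 < x → 0 < f x) ∧ (f x).den = 1 := by
  obtain ⟨f, hf⟩ := exists_linearMap_rat_pos s
  set N := ∏ x ∈ s, (f x).den
  have hN : 0 < (N : ℚ) := by positivity
  refine ⟨(N : ℚ) • f, fun x hx => ⟨fun hx0 => mul_pos hN (hf x hx hx0), ?_⟩⟩
  exact Rat.den_natCast_mul_eq_one (Finset.dvd_prod_of_mem _ hx)

theorem Rat.natCast_num_toNat {q : ℚ} (hq : q.den = 1) (h0 : 0 ≤ q) : (q.num.toNat : ℚ) = q := by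
  rw [← Rat.coe_int_num_of_den_eq_one hq]
  exact_mod_cast Int.toNat_of_nonneg (Rat.num_nonneg.mpr h0)

theorem Finsupp.exists_nsmul_eq_sum_nsmul_of_cast_eq_sum_smul {E κ : Type*} (s : Finset κ)
    (c : κ → ℝ) (hc : ∀ i ∈ s, 0 ≤ c i) (v : κ → E →₀ ℤ) (z : E →₀ ℤ)
    (h : ∑ i ∈ s, c i • (v i).mapRange (Int.cast : ℤ → ℝ) Int.cast_zero =
      z.mapRange (Int.cast : ℤ → ℝ) Int.cast_zero) :
    ∃ N : ℕ, 0 < N ∧ ∃ n : κ → ℕ, N • z = ∑ i ∈ s, n i • v i := by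
  classical
  set t := insert 1 (s.image c)
  obtain ⟨f, hf⟩ := exists_linearMap_rat_pos_den_eq_one t
  have hf_nat : ∀ x ∈ t, 0 ≤ x → ((f x).num.toNat : ℚ) = f x := by
    intro x hx hx0
    refine Rat.natCast_num_toNat (hf x hx).2 ?_
    rcases hx0.eq_or_lt with rfl | hx0
    · simp
    · exact ((hf x hx).1 hx0).le
  have h1 : 1 ∈ t := Finset.mem_insert_self _ _
  have hct : ∀ i ∈ s, c i ∈ t := fun i hi =>
    Finset.mem_insert_of_mem (Finset.mem_image_of_mem _ hi)
  refine ⟨(f 1).num.toNat, ?_, fun i => (f (c i)).num.toNat, ?_⟩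
  · exact_mod_cast (hf_nat 1 h1 zero_le_one).symm ▸ (hf 1 h1).1 one_pos
  ext e
  have hf_mul : ∀ (x : ℝ) (k : ℤ), f (x * k) = f x * k := fun x k => by
    rw [mul_comm, ← zsmul_eq_mul, map_zsmul, zsmul_eq_mul, mul_comm]
  have he := congrArg (fun w => f (w e)) h
  rw [← one_mul ((z.mapRange _ _) e)] at he
  simp only [Finsupp.finsetSum_apply, Finsupp.smul_apply, Finsupp.mapRange_apply, smul_eq_mul,
    map_sum, hf_mul] at he
  have hQ : ((f 1).num.toNat * z e : ℚ) = ∑ i ∈ s, ((f (c i)).num.toNat * v i e : ℚ) := by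
    rw [hf_nat 1 h1 zero_le_one, he.symm]
    exact Finset.sum_congr rfl fun i hi => by rw [hf_nat _ (hct i hi) (hc i hi)]
  simp only [Finsupp.smul_apply, Finsupp.finsetSum_apply, nsmul_eq_mul]
  exact_mod_cast hQ

namespace AddSubmonoid

variable {V : Type*} [AddCommGroup V] [Module ℝ V] (S : AddSubmonoid V) {x y : V}

open Pointwise in
theorem add_mem_convexHull (hx : x ∈ convexHull ℝ (S : Set V))
    (hy : y ∈ convexHull ℝ (S : Set V)) : x + y ∈ convexHull ℝ (S : Set V) := by
  have hSS : (S : Set V) + (S : Set V) ⊆ (S : Set V) := by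
    rintro _ ⟨a, ha, b, hb, rfl⟩
    exact S.add_mem ha hb
  exact convexHull_mono hSS (convexHull_add (R := ℝ) (S : Set V) S ▸ Set.add_mem_add hx hy)

theorem nsmul_mem_convexHull (n : ℕ) (hx : x ∈ convexHull ℝ (S : Set V)) :
    n • x ∈ convexHull ℝ (S : Set V) := by
  induction n with
  | zero => simpa using subset_convexHull ℝ _ S.zero_mem
  | succ n ih => simpa [succ_nsmul] using S.add_mem_convexHull ih hx

theorem smul_mem_convexHull {t : ℝ} (ht : 0 ≤ t) (hx : x ∈ convexHull ℝ (S : Set V)) :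
    t • x ∈ convexHull ℝ (S : Set V) := by
  obtain ⟨n, hn⟩ := exists_nat_gt t
  have hn0 : (0 : ℝ) < n := ht.trans_lt hn
  have htx : t • x = (t / n) • (n • x) := by
    rw [← Nat.cast_smul_eq_nsmul ℝ, smul_smul, div_mul_cancel₀ _ hn0.ne']
  rw [htx]
  exact (convex_convexHull ℝ _).smul_mem_of_zero_mem (subset_convexHull ℝ _ S.zero_mem)
    (S.nsmul_mem_convexHull n hx) ⟨div_nonneg ht hn0.le, (div_le_one hn0).2 hn.le⟩

theorem convexHull_eq_hull : convexHull ℝ (S : Set V) = PointedCone.hull ℝ (S : Set V) := by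
  refine le_antisymm (convexHull_min PointedCone.subset_hull (PointedCone.convex _)) fun x hx => ?_
  induction hx using Submodule.span_induction with
  | mem x hx => exact subset_convexHull ℝ _ hx
  | zero => exact subset_convexHull ℝ _ S.zero_mem
  | add x y _ _ hx hy => exact S.add_mem_convexHull hx hy
  | smul t x _ hx => exact S.smul_mem_convexHull t.2 hx

end AddSubmonoid

theorem PointedCone.mem_hull_iff_exists_finset {V : Type*} [AddCommGroup V] [Module ℝ V]
    {s : Set V} {x : V} :
    x ∈ PointedCone.hull ℝ s ↔ ∃ (t : Finset V) (c : V → ℝ),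
      ↑t ⊆ s ∧ (∀ y ∈ t, 0 ≤ c y) ∧ ∑ y ∈ t, c y • y = x := by
  refine ⟨fun hx => ?_, ?_⟩
  · obtain ⟨c, hcs, hc, rfl⟩ := PointedCone.mem_hull_set.1 hx
    exact ⟨c.support, c, hcs, fun y _ => hc y, rfl⟩
  · rintro ⟨t, c, hts, hc, rfl⟩
    exact Submodule.sum_mem _ fun y hy =>
      Submodule.smul_mem _ ⟨c y, hc y hy⟩ (PointedCone.subset_hull (hts hy))

theorem Submodule.neg_mem_of_neg_sum_smul_mem {R V κ : Type*} [Semifield R] [AddCommGroup V]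
    [Module R V] (K : Submodule R V) {s : Finset κ} {c : κ → R} {y : κ → V}
    (hy : ∀ i ∈ s, y i ∈ K) (hneg : -∑ i ∈ s, c i • y i ∈ K) {i : κ} (hi : i ∈ s)
    (hci : c i ≠ 0) : -y i ∈ K := by
  classical
  have hrest : ∑ j ∈ s.erase i, c j • y j ∈ K :=
    K.sum_mem fun j hj => K.smul_mem _ (hy j (Finset.mem_of_mem_erase hj))
  have hneg_i : -(c i • y i) ∈ K := by
    convert K.add_mem hneg hrest using 1
    rw [← Finset.add_sum_erase s _ hi]
    abel
  simpa [smul_neg, inv_smul_smul₀ hci] using K.smul_mem (c i)⁻¹ hneg_i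

def AddGroupCone.ofSet {G : Type*} [AddCommGroup G] (P : Set G)
    (hadd : ∀ x ∈ P, ∀ y ∈ P, x + y ∈ P) (hpure : P ∩ -P = {0}) : AddGroupCone G where
  carrier := P
  add_mem' ha hb := hadd _ ha _ hb
  zero_mem' := (hpure.ge rfl).1
  eq_zero_of_mem_of_neg_mem' ha hna := hpure.le ⟨ha, hna⟩

section Lattice

variable {E : Type*}

local notation "ι" => Finsupp.mapRange.addMonoidHom (Int.castAddHom ℝ)

theorem AddSubmonoid.mem_of_cast_mem_convexHull (P : AddSubmonoid (E →₀ ℤ))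
    (hsemi : ∀ n : ℤ, 1 ≤ n → ∀ x : E →₀ ℤ, n • x ∈ P → x ∈ P) {z : E →₀ ℤ}
    (hz : ι z ∈ convexHull ℝ (ι '' (P : Set (E →₀ ℤ)))) : z ∈ P := by
  rw [← AddSubmonoid.coe_map, AddSubmonoid.convexHull_eq_hull, AddSubmonoid.coe_map] at hz
  obtain ⟨l, hlP, hl⟩ := Finsupp.mem_span_image_iff_linearCombination _ |>.1 hz
  rw [Finsupp.linearCombination_apply, Finsupp.sum] at hl
  obtain ⟨N, hN, n, hNz⟩ := Finsupp.exists_nsmul_eq_sum_nsmul_of_cast_eq_sum_smul l.support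
    (fun p => l p) (fun p _ => (l p).2) id z hl
  refine hsemi N (by exact_mod_cast hN) z ?_
  rw [natCast_zsmul, hNz]
  exact P.sum_mem fun p hp => P.nsmul_mem (hlP hp) _

theorem AddSubmonoid.convexHull_inter_range_cast (P : AddSubmonoid (E →₀ ℤ))
    (hsemi : ∀ n : ℤ, 1 ≤ n → ∀ x : E →₀ ℤ, n • x ∈ P → x ∈ P) :
    convexHull ℝ (ι '' (P : Set (E →₀ ℤ))) ∩ Set.range ι = ι '' (P : Set (E →₀ ℤ)) := by
  refine Set.Subset.antisymm ?_ fun x hx =>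
    ⟨subset_convexHull ℝ _ hx, Set.image_subset_range _ _ hx⟩
  rintro _ ⟨hz, z, rfl⟩
  exact Set.mem_image_of_mem _ (P.mem_of_cast_mem_convexHull hsemi hz)

theorem AddGroupCone.convexHull_inter_neg_cast (P : AddGroupCone (E →₀ ℤ))
    (hsemi : ∀ n : ℤ, 1 ≤ n → ∀ x : E →₀ ℤ, n • x ∈ P → x ∈ P) :
    convexHull ℝ (ι '' (P : Set (E →₀ ℤ))) ∩ -convexHull ℝ (ι '' (P : Set (E →₀ ℤ))) = {0} := by
  have hC : convexHull ℝ (ι '' (P : Set (E →₀ ℤ))) = PointedCone.hull ℝ (ι '' (P : Set (E →₀ ℤ))) :=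
    (P.toAddSubmonoid.map ι).convexHull_eq_hull
  refine Set.Subset.antisymm ?_ (by simp [hC])
  rintro x ⟨hx, hnx⟩
  rw [hC] at hx hnx
  obtain ⟨l, hlP, rfl⟩ := Finsupp.mem_span_image_iff_linearCombination _ |>.1 hx
  rw [Finsupp.linearCombination_apply, Finsupp.sum] at hnx ⊢
  refine Finset.sum_eq_zero fun p hp => ?_
  have hp_neg : -ι p ∈ PointedCone.hull ℝ (ι '' (P : Set (E →₀ ℤ))) :=
    Submodule.neg_mem_of_neg_sum_smul_mem _
      (fun q hq => PointedCone.subset_hull (Set.mem_image_of_mem _ (hlP hq))) hnx hp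
      (Finsupp.mem_support_iff.1 hp)
  rw [← map_neg, ← SetLike.mem_coe, ← hC] at hp_neg
  rw [eq_zero_of_mem_of_neg_mem (hlP hp) (P.mem_of_cast_mem_convexHull hsemi hp_neg),
    map_zero ι, smul_zero]

end Lattice

/-- the convex hull in `⊕_E ℝ` of (the image of) the positive cone of a
semiclosed po-group order on `⊕_E ℤ` is the set of finite nonnegative real linear
combinations of elements of `ι '' P`, is a vector-space positive cone, meets the
integer vectors exactly in `ι '' P`, and the assignment `P ↦ convexHull ℝ (ι '' P)`
is injective. -/
theorem stmt9 {E : Type*}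
    (ι : (E →₀ ℤ) → (E →₀ ℝ))
    (hι : ι = Finsupp.mapRange (fun z : ℤ => (z : ℝ)) (by norm_num))
    (P : Set (E →₀ ℤ))
    (hadd : ∀ x ∈ P, ∀ y ∈ P, x + y ∈ P)
    (hpure : P ∩ (-P) = {0})
    (hsemi : ∀ (n : ℤ), 1 ≤ n → ∀ x : E →₀ ℤ, n • x ∈ P → x ∈ P) :
    (convexHull ℝ (ι '' P) =
      {x | ∃ (s : Finset (E →₀ ℝ)) (c : (E →₀ ℝ) → ℝ),
        ↑s ⊆ ι '' P ∧ (∀ y ∈ s, 0 ≤ c y) ∧ ∑ y ∈ s, c y • y = x}) ∧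
    (∀ x ∈ convexHull ℝ (ι '' P), ∀ y ∈ convexHull ℝ (ι '' P),
      x + y ∈ convexHull ℝ (ι '' P)) ∧
    (∀ (α : ℝ), 0 ≤ α → ∀ x ∈ convexHull ℝ (ι '' P),
      α • x ∈ convexHull ℝ (ι '' P)) ∧
    (convexHull ℝ (ι '' P) ∩ (-(convexHull ℝ (ι '' P))) = {0}) ∧
    (convexHull ℝ (ι '' P) ∩ Set.range ι = ι '' P) ∧
    (∀ P' : Set (E →₀ ℤ),
      (∀ x ∈ P', ∀ y ∈ P', x + y ∈ P') → (P' ∩ (-P') = {0}) →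
      (∀ (n : ℤ), 1 ≤ n → ∀ x : E →₀ ℤ, n • x ∈ P' → x ∈ P') →
      convexHull ℝ (ι '' P) = convexHull ℝ (ι '' P') → P = P') := by
  obtain rfl : ι = Finsupp.mapRange.addMonoidHom (Int.castAddHom ℝ) := hι
  let Pc := AddGroupCone.ofSet P hadd hpure
  let S := Pc.toAddSubmonoid.map (Finsupp.mapRange.addMonoidHom (Int.castAddHom ℝ))
  refine ⟨?_, fun x hx y hy => S.add_mem_convexHull hx hy,
    fun α hα x hx => S.smul_mem_convexHull hα hx, Pc.convexHull_inter_neg_cast hsemi,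
    Pc.toAddSubmonoid.convexHull_inter_range_cast hsemi, ?_⟩
  · ext x
    show x ∈ convexHull ℝ (S : Set (E →₀ ℝ)) ↔ _
    rw [S.convexHull_eq_hull, SetLike.mem_coe, PointedCone.mem_hull_iff_exists_finset]
    rfl
  · intro P' hadd' hpure' hsemi' hPP'
    refine (Finsupp.mapRange_injective (Int.cast : ℤ → ℝ) Int.cast_zero
      Int.cast_injective).image_injective ?_
    have hP := Pc.toAddSubmonoid.convexHull_inter_range_cast hsemi
    have hP' := (AddGroupCone.ofSet P' hadd' hpure').toAddSubmonoid.convexHull_inter_range_cast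
      hsemi'
    exact hP.symm.trans ((congrArg (· ∩ Set.range _) hPP').trans hP')
end

section
/- Let (G, ≤) be a semiclosed partially ordered torsion-free abelian group, E a maximal independent set in G, ⟨E⟩ the subgroup of G generated by E, and φ : G → ⊕_E ℚ an injective additive group homomorphism with φ(a) = e_a for all a ∈ E. Let G₊ := {g ∈ G | 0 ≤ g}. Then the rational convex hull of φ[G₊ ∩ ⟨E⟩] in ⊕_E ℚ intersected with φ[G] equals φ[G₊]: conv_ℚ(φ[G₊ ∩ ⟨E⟩]) ∩ φ[G] = φ[G₊]. -/
/-!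
The vectors having some positive integer multiple in `φ[G₊]` form a rational convex cone, which
therefore contains the convex hull. So if `φ g` lies in the hull, then `φ (N • g) ∈ φ[G₊]` for
some `N > 0`, whence `N • g ∈ G₊` by injectivity and `g ∈ G₊` by semiclosedness.
Conversely, maximality of `E` gives `n • g ∈ ⟨E⟩` for some `n > 0`, and `φ g` lies on the
segment from `φ 0` to `φ (n • g)`.
-/

open Set

theorem MaxIndependent.exists_ne_zero_smul_mem_span {G : Type*} [AddCommGroup G] {E : Set G}
    (hE : MaxIndependent E) (g : G) : ∃ n : ℤ, n ≠ 0 ∧ n • g ∈ Submodule.span ℤ E := by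
  by_contra! h
  have hins : insert g E = E :=
    hE.2 _ (subset_insert g E) <| LinearIndepOn.id_insert' hE.1 fun r ↦ not_imp_not.mp (h r)
  exact h 1 one_ne_zero (by simpa using Submodule.subset_span (hins ▸ mem_insert g E))

theorem MaxIndependent.exists_pos_nsmul_mem_closure {G : Type*} [AddCommGroup G] {E : Set G}
    (hE : MaxIndependent E) (g : G) : ∃ n : ℕ, 0 < n ∧ n • g ∈ AddSubgroup.closure E := by
  obtain ⟨n, hn, hmem⟩ := hE.exists_ne_zero_smul_mem_span g
  rw [← Submodule.span_int_eq_addSubgroupClosure]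
  refine ⟨n.natAbs, Int.natAbs_pos.mpr hn, ?_⟩
  rcases Int.natAbs_eq n with h | h
  · rwa [h, natCast_zsmul] at hmem
  · rwa [h, neg_smul, natCast_zsmul, Submodule.neg_mem_iff] at hmem

def nonnegAddSubmonoid {G : Type*} [AddCommGroup G] (le : G → G → Prop) [IsPreorder G le]
    (hcomp : ∀ a b c : G, le a b → le (a + c) (b + c)) : AddSubmonoid G where
  carrier := {g | le 0 g}
  zero_mem' := refl_of le 0
  add_mem' {a b} ha hb := trans_of le hb (by simpa using hcomp 0 a b ha)

section RatCone

variable {V : Type*} [AddCommGroup V] [Module ℚ V]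

def AddSubmonoid.ratCone (Q : AddSubmonoid V) : ConvexCone ℚ V where
  carrier := {x | ∃ n : ℕ, 0 < n ∧ n • x ∈ Q}
  smul_mem' c hc x := by
    rintro ⟨n, hn, hx⟩
    have hnum : 0 < c.num := Rat.num_pos.mpr hc
    refine ⟨n * c.den, Nat.mul_pos hn c.den_pos, ?_⟩
    have hcx : (n * c.den) • (c • x) = c.num.toNat • n • x := by
      rw [← Nat.cast_smul_eq_nsmul ℚ, smul_smul, ← Nat.cast_smul_eq_nsmul ℚ n,
        ← Nat.cast_smul_eq_nsmul ℚ, smul_smul]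
      congr 1
      push_cast
      have hcast : ((c.num.toNat : ℕ) : ℚ) = c.num := by
        exact_mod_cast Int.toNat_of_nonneg hnum.le
      rw [hcast, mul_assoc, Rat.den_mul_eq_num, mul_comm]
    rw [hcx]
    exact Q.nsmul_mem hx _
  add_mem' x := by
    rintro ⟨n, hn, hx⟩ y ⟨m, hm, hy⟩
    refine ⟨n * m, Nat.mul_pos hn hm, ?_⟩
    rw [nsmul_add, mul_nsmul, mul_nsmul']
    exact Q.add_mem (Q.nsmul_mem hx m) (Q.nsmul_mem hy n)

theorem AddSubmonoid.convexHull_subset_ratCone (Q : AddSubmonoid V) :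
    convexHull ℚ (Q : Set V) ⊆ Q.ratCone :=
  convexHull_min (fun x hx ↦ ⟨1, one_pos, by rwa [one_nsmul]⟩) Q.ratCone.convex

theorem mem_convexHull_of_nsmul_mem {S : Set V} (h0 : (0 : V) ∈ S) {n : ℕ} (hn : 0 < n)
    {x : V} (hx : n • x ∈ S) : x ∈ convexHull ℚ S := by
  have hn' : (1 : ℚ) ≤ n := by exact_mod_cast hn
  have hmem := (convex_convexHull ℚ S).smul_mem_of_zero_mem (subset_convexHull ℚ S h0)
    (subset_convexHull ℚ S hx) ⟨inv_nonneg.mpr (by linarith), inv_le_one_of_one_le₀ hn'⟩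
  rwa [← Nat.cast_smul_eq_nsmul ℚ, inv_smul_smul₀ (by positivity)] at hmem

end RatCone

theorem stmt10_general {G : Type*} [AddCommGroup G]
    (le : G → G → Prop) (hpo : IsPartialOrder G le)
    (hcomp : ∀ a b c : G, le a b → le (a + c) (b + c))
    (hsemi : ∀ (n : ℤ) (g : G), 1 ≤ n → le 0 (n • g) → le 0 g)
    (E : Set G) (hE : MaxIndependent E)
    (φ : G →+ (E →₀ ℚ)) (hφinj : Function.Injective φ) :
    convexHull ℚ (φ '' ({g : G | le 0 g} ∩ (AddSubgroup.closure E : Set G))) ∩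
        Set.range φ
      = φ '' {g : G | le 0 g} := by
  let P := nonnegAddSubmonoid le hcomp
  set S := φ '' ({g : G | le 0 g} ∩ (AddSubgroup.closure E : Set G))
  apply Subset.antisymm
  · rintro _ ⟨hx, g, rfl⟩
    have hSP : S ⊆ P.map φ := image_mono inter_subset_left
    obtain ⟨n, hn, p, hp, hpg⟩ := (P.map φ).convexHull_subset_ratCone (convexHull_mono hSP hx)
    have hpn : p = n • g := hφinj (by rw [hpg, map_nsmul])
    refine ⟨g, hsemi n g (by exact_mod_cast hn) ?_, rfl⟩
    rw [natCast_zsmul, ← hpn]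
    exact hp
  · rintro _ ⟨g, hg, rfl⟩
    obtain ⟨n, hn, hmem⟩ := hE.exists_pos_nsmul_mem_closure g
    have h0 : (0 : E →₀ ℚ) ∈ S := ⟨0, ⟨P.zero_mem, zero_mem _⟩, map_zero φ⟩
    have hng : n • φ g ∈ S := ⟨n • g, ⟨P.nsmul_mem hg n, hmem⟩, map_nsmul φ n g⟩
    exact ⟨mem_convexHull_of_nsmul_mem h0 hn hng, g, rfl⟩

/-- for a semiclosed po-group order on a torsion-free abelian group `G`,
the rational convex hull of `φ[G₊ ∩ ⟨E⟩]` intersected with `φ[G]` equals `φ[G₊]`. -/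
theorem stmt10 {G : Type*} [AddCommGroup G]
    (htf : ∀ (n : ℤ) (g : G), n • g = 0 → n ≠ 0 → g = 0)
    (le : G → G → Prop) (hpo : IsPartialOrder G le)
    (hcomp : ∀ a b c : G, le a b → le (a + c) (b + c))
    (hsemi : ∀ (n : ℤ) (g : G), 1 ≤ n → le 0 (n • g) → le 0 g)
    (E : Set G) (hE : MaxIndependent E)
    (φ : G →+ (E →₀ ℚ)) (hφinj : Function.Injective φ)
    (hφE : ∀ a : E, φ (a : G) = Finsupp.single a 1) :
    convexHull ℚ (φ '' ({g : G | le 0 g} ∩ (AddSubgroup.closure E : Set G))) ∩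
        Set.range φ
      = φ '' {g : G | le 0 g} :=
  stmt10_general le hpo hcomp hsemi E hE φ hφinj
end

section
/- Let ⊕_E ℝ be the real vector space of finitely supported functions E → ℝ equipped with a linear vector-space order ≤. For a vector a define W_a := H_a + ℝ • a, where H_a := span_ℝ {x | 0 ≤ x and n • x ≤ |a| for every natural number n} and |a| := max(a, −a). Then the family {W_a | a ∈ ⊕_E ℝ} is a chain under set inclusion (for all a, b either W_a ⊆ W_b or W_b ⊆ W_a) and ⋃_{a} W_a = ⊕_E ℝ. -/
/-!
For `0 < b` and `|x| ≤ b`, the real number `α = sup {r | r • b ≤ x}` is the standard part of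
`x / b`: the remainder `x - α • b` has absolute value below `ε • b` for every `ε > 0`, so it lies
in `H_b = infinitesimalSpan b`, and `x ∈ W_b`. Hence `|a| ≤ |b|` implies `W_a ⊆ W_b`, and the
`W_a` form a chain since the order is total; trivially `x ∈ W_x`.
-/

/-- A linear vector-space order on `⊕_E ℝ`, given as a binary relation. -/
def IsLinVecOrder {E : Type*} (le : (E →₀ ℝ) → (E →₀ ℝ) → Prop) : Prop :=
  IsLinearOrder (E →₀ ℝ) le ∧
  (∀ x y z : E →₀ ℝ, le x y → le (x + z) (y + z)) ∧
  (∀ (α : ℝ) (v : E →₀ ℝ), 0 ≤ α → le 0 v → le 0 (α • v))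

open Classical in
/-- `|a| = max (a, -a)` with respect to a total order `le`. -/
noncomputable def vabs {E : Type*} (le : (E →₀ ℝ) → (E →₀ ℝ) → Prop) (a : E →₀ ℝ) :
    E →₀ ℝ :=
  if le 0 a then a else -a

/-- `H_a = span_ℝ {x | 0 ≤ x ∧ ∀ n : ℕ, n • x ≤ |a|}`. -/
noncomputable def Hsub {E : Type*} (le : (E →₀ ℝ) → (E →₀ ℝ) → Prop) (a : E →₀ ℝ) :
    Submodule ℝ (E →₀ ℝ) :=
  Submodule.span ℝ {x | le 0 x ∧ ∀ n : ℕ, le (n • x) (vabs le a)}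

open Submodule

section LinearOrderedVectorSpace

variable {V : Type*} [AddCommGroup V] [LinearOrder V] [Module ℝ V]

def infinitesimalSpan (a : V) : Submodule ℝ V :=
  span ℝ {x | 0 ≤ x ∧ ∀ n : ℕ, n • x ≤ |a|}

lemma infinitesimalSpan_mono {a b : V} (h : |a| ≤ |b|) :
    infinitesimalSpan a ≤ infinitesimalSpan b :=
  span_mono fun _ ⟨hx, hxa⟩ ↦ ⟨hx, fun n ↦ (hxa n).trans h⟩

lemma nsmul_le_of_forall_lt_smul [PosSMulMono ℝ V] {y b : V} (hb : 0 ≤ b)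
    (h : ∀ ε : ℝ, 0 < ε → y < ε • b) (n : ℕ) : n • y ≤ b := by
  rcases n.eq_zero_or_pos with rfl | hn
  · simpa using hb
  have hn' : (0 : ℝ) < n := Nat.cast_pos.mpr hn
  calc n • y = (n : ℝ) • y := (Nat.cast_smul_eq_nsmul ℝ n y).symm
    _ ≤ (n : ℝ) • ((n : ℝ)⁻¹ • b) := smul_le_smul_of_nonneg_left (h _ (inv_pos.mpr hn')).le hn'.le
    _ = b := by rw [smul_smul, mul_inv_cancel₀ hn'.ne', one_smul]

variable [IsOrderedAddMonoid V]

lemma mem_infinitesimalSpan_of_nsmul_abs_le {a y : V} (h : ∀ n : ℕ, n • |y| ≤ |a|) :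
    y ∈ infinitesimalSpan a :=
  abs_mem_iff.mp (subset_span ⟨abs_nonneg y, h⟩)

variable [PosSMulMono ℝ V]

lemma abs_sub_sSup_smul_lt {x b : V} (hb : 0 < b) (hx : |x| ≤ b) {ε : ℝ} (hε : 0 < ε) :
    |x - sSup {r : ℝ | r • b ≤ x} • b| < ε • b := by
  have := PosSMulMono.toPosSMulStrictMono (α := ℝ) (β := V)
  set S := {r : ℝ | r • b ≤ x}
  have hS : S.Nonempty := ⟨-1, show (-1 : ℝ) • b ≤ x by simpa using (abs_le.mp hx).1⟩
  have hSbdd : BddAbove S := ⟨1, fun r hr ↦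
    (smul_le_smul_iff_of_pos_right hb).mp (by simpa using hr.trans ((le_abs_self x).trans hx))⟩
  rw [abs_sub_lt_iff]
  constructor
  · by_contra! h
    have : sSup S + ε ∈ S := by simpa [S, add_smul, ← le_sub_iff_add_le'] using h
    linarith [le_csSup hSbdd this]
  · obtain ⟨r, hr, hlt⟩ := exists_lt_of_lt_csSup hS (sub_lt_self (sSup S) hε)
    have := (smul_lt_smul_of_pos_right hlt hb).trans_le hr
    rw [sub_smul] at this
    exact sub_lt_comm.mp this

lemma mem_infinitesimalSpan_sup_span_of_abs_le {x b : V} (h : |x| ≤ |b|) :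
    x ∈ infinitesimalSpan b ⊔ span ℝ {b} := by
  rcases (abs_nonneg b).eq_or_lt with hb | hb
  · rw [← hb, abs_nonpos_iff] at h
    simp [h]
  set α := sSup {r : ℝ | r • |b| ≤ x}
  have hrem : x - α • |b| ∈ infinitesimalSpan b :=
    mem_infinitesimalSpan_of_nsmul_abs_le <|
      nsmul_le_of_forall_lt_smul hb.le fun _ hε ↦ abs_sub_sSup_smul_lt hb h hε
  have hmain : α • |b| ∈ span ℝ {b} := smul_mem _ _ (abs_mem_iff.mpr (mem_span_singleton_self b))
  simpa using add_mem (mem_sup_left hrem) (mem_sup_right hmain)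

lemma infinitesimalSpan_sup_span_mono {a b : V} (h : |a| ≤ |b|) :
    infinitesimalSpan a ⊔ span ℝ {a} ≤ infinitesimalSpan b ⊔ span ℝ {b} :=
  sup_le ((infinitesimalSpan_mono h).trans le_sup_left) <|
    (span_singleton_le_iff_mem _ _).mpr (mem_infinitesimalSpan_sup_span_of_abs_le h)

end LinearOrderedVectorSpace

/-- `E →₀ ℝ` ordered by `le`; a type synonym, so that Mathlib's order API for `le` does not clash
with the pointwise order on `E →₀ ℝ`. -/
def OrderedFinsupp {E : Type*} (_le : (E →₀ ℝ) → (E →₀ ℝ) → Prop) : Type _ := E →₀ ℝ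

namespace OrderedFinsupp

variable {E : Type*} {le : (E →₀ ℝ) → (E →₀ ℝ) → Prop}

noncomputable instance : AddCommGroup (OrderedFinsupp le) :=
  inferInstanceAs (AddCommGroup (E →₀ ℝ))

noncomputable instance : Module ℝ (OrderedFinsupp le) := inferInstanceAs (Module ℝ (E →₀ ℝ))

variable [hle : Fact (IsLinVecOrder le)]

noncomputable instance : LinearOrder (OrderedFinsupp le) :=
  have := hle.out.1
  { le := le
    le_refl := refl_of le
    le_trans := fun _ _ _ ↦ trans_of le
    le_antisymm := fun _ _ ↦ antisymm_of le
    le_total := total_of le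
    toDecidableLE := Classical.decRel le }

instance : IsOrderedAddMonoid (OrderedFinsupp le) where
  add_le_add_left x y h z := hle.out.2.1 x y z h

instance : PosSMulMono ℝ (OrderedFinsupp le) :=
  .of_smul_nonneg fun r hr v hv ↦ hle.out.2.2 r v hr hv

lemma abs_eq_vabs (a : OrderedFinsupp le) : |a| = vabs le a := by
  by_cases h : le 0 a
  · exact (abs_of_nonneg (α := OrderedFinsupp le) h).trans (if_pos h).symm
  · exact (abs_of_neg (α := OrderedFinsupp le) (not_le.mp h)).trans (if_neg h).symm

lemma infinitesimalSpan_eq_hsub (a : OrderedFinsupp le) : infinitesimalSpan a = Hsub le a := by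
  simp only [infinitesimalSpan, abs_eq_vabs]
  rfl

end OrderedFinsupp

/-- the subspaces `W_a := H_a + ℝ • a` form a chain under inclusion whose
union is the whole space `⊕_E ℝ`. -/
theorem stmt13 {E : Type*}
    (le : (E →₀ ℝ) → (E →₀ ℝ) → Prop) (hle : IsLinVecOrder le) :
    (∀ a b : E →₀ ℝ,
      Hsub le a ⊔ Submodule.span ℝ {a} ≤ Hsub le b ⊔ Submodule.span ℝ {b} ∨
      Hsub le b ⊔ Submodule.span ℝ {b} ≤ Hsub le a ⊔ Submodule.span ℝ {a}) ∧
    (∀ x : E →₀ ℝ, ∃ a : E →₀ ℝ, x ∈ Hsub le a ⊔ Submodule.span ℝ {a}) := by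
  have : Fact (IsLinVecOrder le) := ⟨hle⟩
  refine ⟨fun a b ↦ ?_, fun x ↦ ⟨x, mem_sup_right (mem_span_singleton_self x)⟩⟩
  rw [← OrderedFinsupp.infinitesimalSpan_eq_hsub a, ← OrderedFinsupp.infinitesimalSpan_eq_hsub b]
  exact (le_total (α := OrderedFinsupp le) |a| |b|).imp infinitesimalSpan_sup_span_mono
    infinitesimalSpan_sup_span_mono
end

section
/- Let ≤ and ≤′ be two linear vector-space orders on the real vector space ⊕_E ℝ and let a be a rational vector. Let V_a, H_a be taken with respect to ≤ and V′_a, H′_a with respect to ≤′, and write Act(W) := span_ℝ(W ∩ rational vectors). If Act(V_a) ≠ Act(V′_a), or if H_a ∩ Act(V_a) ≠ H′_a ∩ Act(V′_a), then the orders ≤ and ≤′ differ on the rational vectors: there exists a rational vector x with 0 ≤ x but not 0 ≤′ x, or with 0 ≤′ x but not 0 ≤ x. -/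
/-- The rational vectors of `⊕_E ℝ`. -/
def RatVec (E : Type*) : Set (E →₀ ℝ) := {x | ∀ e : E, ∃ q : ℚ, x e = (q : ℝ)}

/-- `V_a = span_ℝ {x | 0 ≤ x ∧ x ≤ |a|}`. -/
noncomputable def Vsub {E : Type*} (le : (E →₀ ℝ) → (E →₀ ℝ) → Prop) (a : E →₀ ℝ) :
    Submodule ℝ (E →₀ ℝ) :=
  Submodule.span ℝ {x | le 0 x ∧ le x (vabs le a)}

/-- The active subspace `Act(W) = span_ℝ (W ∩ rational vectors)`. -/
noncomputable def ActSub {E : Type*} (W : Submodule ℝ (E →₀ ℝ)) :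
    Submodule ℝ (E →₀ ℝ) :=
  Submodule.span ℝ ((W : Set (E →₀ ℝ)) ∩ RatVec E)

/-!
Suppose `≤` and `≤′` agree on rational vectors. Then `b := |a|` is the same rational vector for
both orders. A rational `x` lies in `V_a` iff `-n • b ≤ x ≤ n • b` for some `n : ℕ`, a comparison
of rational vectors, so `V_a` and `V′_a` have the same rational points and `Act(V_a) = Act(V′_a)`.
For `b ≠ 0`, every `x ∈ V_a` has a standard part `t` relative to `b` (`r • b ≤ x` for `r < t` and
`x ≤ r • b` for `r > t`); it is additive and homogeneous, and `x ∈ H_a` iff it vanishes. For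
rational `x` it is determined by rational comparisons, so by linearity the standard parts for `≤`
and `≤′` agree on all of `Act(V_a)`, and with them membership in `H_a` and `H′_a`.
-/

open Submodule Set

theorem mem_of_abs_mem {M S : Type*} [AddGroup M] [LinearOrder M] [SetLike S M] [NegMemClass S M]
    {p : S} {x : M} (h : |x| ∈ p) : x ∈ p := by
  rcases abs_choice x with hx | hx <;> rw [hx] at h
  · exact h
  · simpa using neg_mem h

section OrderedModule

variable {M : Type*} [AddCommGroup M] [LinearOrder M] [Module ℝ M] {b x y : M} {s t : ℝ}

/-- `x` equals `t • b` up to an element that is infinitesimal compared with `b`. -/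
def IsStdPart (b x : M) (t : ℝ) : Prop :=
  (∀ r < t, r • b ≤ x) ∧ ∀ r, t < r → x ≤ r • b

namespace IsStdPart

theorem add [IsOrderedAddMonoid M] (hx : IsStdPart b x s) (hy : IsStdPart b y t) :
    IsStdPart b (x + y) (s + t) := by
  constructor
  · intro r hr
    have h := add_le_add (hx.1 (s - (s + t - r) / 2) (by linarith))
      (hy.1 (t - (s + t - r) / 2) (by linarith))
    rwa [← add_smul, show s - (s + t - r) / 2 + (t - (s + t - r) / 2) = r by ring] at h
  · intro r hr
    have h := add_le_add (hx.2 (s + (r - s - t) / 2) (by linarith))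
      (hy.2 (t + (r - s - t) / 2) (by linarith))
    rwa [← add_smul, show s + (r - s - t) / 2 + (t + (r - s - t) / 2) = r by ring] at h

theorem neg [IsOrderedAddMonoid M] (hx : IsStdPart b x s) : IsStdPart b (-x) (-s) :=
  ⟨fun r hr => by simpa using neg_le_neg (hx.2 (-r) (by linarith)),
    fun r hr => by simpa using neg_le_neg (hx.1 (-r) (by linarith))⟩

theorem smul_of_pos [PosSMulMono ℝ M] (hx : IsStdPart b x s) {c : ℝ} (hc : 0 < c) :
    IsStdPart b (c • x) (c * s) := by
  constructor
  · intro r hr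
    have h := smul_le_smul_of_nonneg_left (hx.1 (r / c) ((div_lt_iff₀' hc).mpr hr)) hc.le
    rwa [smul_smul, mul_div_cancel₀ r hc.ne'] at h
  · intro r hr
    have h := smul_le_smul_of_nonneg_left (hx.2 (r / c) ((lt_div_iff₀' hc).mpr hr)) hc.le
    rwa [smul_smul, mul_div_cancel₀ r hc.ne'] at h

variable [IsOrderedAddMonoid M] [PosSMulStrictMono ℝ M]

theorem le (hb : 0 < b) (hs : IsStdPart b x s) (ht : IsStdPart b x t) : s ≤ t := by
  by_contra! hts
  obtain ⟨r₁, htr₁, hr₁s⟩ := exists_between hts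
  obtain ⟨r₂, hr₁r₂, hr₂s⟩ := exists_between hr₁s
  have := (smul_le_smul_iff_of_pos_right hb).mp ((hs.1 r₂ hr₂s).trans (ht.2 r₁ htr₁))
  linarith

theorem eq (hb : 0 < b) (hs : IsStdPart b x s) (ht : IsStdPart b x t) : s = t :=
  le_antisymm (hs.le hb ht) (ht.le hb hs)

theorem zero (hb : 0 ≤ b) : IsStdPart b 0 0 :=
  ⟨fun _ hr => smul_nonpos_of_nonpos_of_nonneg hr.le hb, fun _ hr => smul_nonneg hr.le hb⟩

theorem smul (hb : 0 ≤ b) (hx : IsStdPart b x s) (c : ℝ) : IsStdPart b (c • x) (c * s) := by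
  rcases lt_trichotomy c 0 with hc | rfl | hc
  · simpa using (hx.smul_of_pos (neg_pos.mpr hc)).neg
  · simpa using zero hb
  · exact hx.smul_of_pos hc

end IsStdPart

variable [IsOrderedAddMonoid M] [PosSMulStrictMono ℝ M]

theorem exists_isStdPart (hb : 0 < b) (hx : ∃ n : ℕ, |x| ≤ (n : ℝ) • b) :
    ∃ t, IsStdPart b x t := by
  obtain ⟨n, hn⟩ := hx
  rw [abs_le] at hn
  have hne : {r : ℝ | r • b ≤ x}.Nonempty := ⟨-n, by simpa using hn.1⟩
  have hbdd : BddAbove {r : ℝ | r • b ≤ x} :=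
    ⟨n, fun r hr => (smul_le_smul_iff_of_pos_right hb).mp (hr.trans hn.2)⟩
  refine ⟨sSup {r : ℝ | r • b ≤ x}, fun r hr => ?_, fun r hr => ?_⟩
  · obtain ⟨s, hs, hrs⟩ := exists_lt_of_lt_csSup hne hr
    exact (smul_le_smul_of_nonneg_right hrs.le hb.le).trans hs
  · by_contra! h
    exact (le_csSup hbdd h.le).not_gt hr

theorem isStdPart_iff_rat (hb : 0 ≤ b) :
    IsStdPart b x t ↔
      (∀ q : ℚ, (q : ℝ) < t → (q : ℝ) • b ≤ x) ∧ ∀ q : ℚ, t < q → x ≤ (q : ℝ) • b := by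
  refine ⟨fun h => ⟨fun q => h.1 q, fun q => h.2 q⟩, fun h => ⟨fun r hr => ?_, fun r hr => ?_⟩⟩
  · obtain ⟨q, hrq, hqt⟩ := exists_rat_btwn hr
    exact (smul_le_smul_of_nonneg_right hrq.le hb).trans (h.1 q hqt)
  · obtain ⟨q, htq, hqr⟩ := exists_rat_btwn hr
    exact (h.2 q htq).trans (smul_le_smul_of_nonneg_right hqr.le hb)

theorem isStdPart_zero_iff (hb : 0 ≤ b) : IsStdPart b x 0 ↔ ∀ r : ℝ, r • x ≤ b := by
  refine ⟨fun h r => ?_, fun h => ⟨fun r hr => ?_, fun r hr => ?_⟩⟩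
  · simpa using (h.smul hb r).2 1 (by simp)
  · simpa [smul_smul, hr.ne] using smul_le_smul_of_nonpos_left (h r⁻¹) hr.le
  · simpa [smul_smul, hr.ne'] using smul_le_smul_of_nonneg_left (h r⁻¹) hr.le

theorem mem_span_Icc_zero_of_le_smul (hb : 0 ≤ b) (hx : 0 ≤ x) {r : ℝ} (hxr : x ≤ r • b) :
    x ∈ span ℝ (Icc 0 b) := by
  rcases le_or_gt r 0 with hr | hr
  · rw [le_antisymm (hxr.trans (smul_nonpos_of_nonpos_of_nonneg hr hb)) hx]
    exact zero_mem _
  · have hmem : r⁻¹ • x ∈ Icc 0 b := by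
      refine ⟨smul_nonneg (inv_nonneg.mpr hr.le) hx, ?_⟩
      calc r⁻¹ • x ≤ r⁻¹ • r • b := smul_le_smul_of_nonneg_left hxr (inv_nonneg.mpr hr.le)
        _ = b := inv_smul_smul₀ hr.ne' b
    simpa [smul_smul, hr.ne'] using (span ℝ (Icc 0 b)).smul_mem r (subset_span hmem)

theorem mem_span_Icc_zero_iff (hb : 0 ≤ b) :
    x ∈ span ℝ (Icc 0 b) ↔ ∃ n : ℕ, |x| ≤ (n : ℝ) • b := by
  refine ⟨fun hx => ?_, fun ⟨n, hn⟩ =>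
    mem_of_abs_mem (mem_span_Icc_zero_of_le_smul hb (abs_nonneg x) hn)⟩
  induction hx using Submodule.span_induction with
  | mem y hy => exact ⟨1, by rw [abs_of_nonneg hy.1, Nat.cast_one, one_smul]; exact hy.2⟩
  | zero => exact ⟨0, by simp⟩
  | add y z _ _ hy hz =>
    obtain ⟨m, hm⟩ := hy
    obtain ⟨n, hn⟩ := hz
    refine ⟨m + n, (abs_add_le y z).trans ?_⟩
    rw [Nat.cast_add, add_smul]
    exact add_le_add hm hn
  | smul c y _ hy =>
    obtain ⟨n, hn⟩ := hy
    refine ⟨⌈|c|⌉₊ * n, ?_⟩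
    calc |c • y| = |c| • |y| := abs_smul c y
      _ ≤ |c| • (n : ℝ) • b := smul_le_smul_of_nonneg_left hn (abs_nonneg c)
      _ = (|c| * n) • b := (mul_smul _ _ _).symm
      _ ≤ ((⌈|c|⌉₊ * n : ℕ) : ℝ) • b := by
        push_cast
        exact smul_le_smul_of_nonneg_right
          (mul_le_mul_of_nonneg_right (Nat.le_ceil _) n.cast_nonneg) hb

theorem mem_span_nsmul_le_iff (hb : 0 ≤ b) :
    x ∈ span ℝ {y : M | 0 ≤ y ∧ ∀ n : ℕ, n • y ≤ b} ↔ ∀ r : ℝ, r • x ≤ b := by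
  constructor
  · intro hx
    induction hx using Submodule.span_induction with
    | mem y hy =>
      intro r
      calc r • y ≤ (⌈r⌉₊ : ℝ) • y := smul_le_smul_of_nonneg_right (Nat.le_ceil r) hy.1
        _ = ⌈r⌉₊ • y := Nat.cast_smul_eq_nsmul ℝ _ y
        _ ≤ b := hy.2 _
    | zero => simpa using hb
    | add y z _ _ hy hz =>
      intro r
      calc r • (y + z) = (2⁻¹ : ℝ) • ((2 * r) • y + (2 * r) • z) := by module
        _ ≤ (2⁻¹ : ℝ) • (b + b) :=
          smul_le_smul_of_nonneg_left (add_le_add (hy _) (hz _)) (by norm_num)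
        _ = b := by module
    | smul c y _ hy => exact fun r => by simpa [smul_smul] using hy (r * c)
  · intro hx
    refine mem_of_abs_mem (subset_span ⟨abs_nonneg x, fun n => ?_⟩)
    rw [← Nat.cast_smul_eq_nsmul ℝ]
    rcases abs_choice x with h | h <;> rw [h]
    · exact hx n
    · simpa using hx (-n)

end OrderedModule

section LinVecOrder

variable {E : Type*}

/-- `⊕_E ℝ` with `le` as its order, so that Mathlib's ordered-module API applies. -/
def OrderedBy (le : (E →₀ ℝ) → (E →₀ ℝ) → Prop) (_ : IsLinVecOrder le) : Type _ := E →₀ ℝ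

namespace OrderedBy

variable {le : (E →₀ ℝ) → (E →₀ ℝ) → Prop} {hle : IsLinVecOrder le}

noncomputable instance : AddCommGroup (OrderedBy le hle) := inferInstanceAs (AddCommGroup (E →₀ ℝ))

noncomputable instance : Module ℝ (OrderedBy le hle) := inferInstanceAs (Module ℝ (E →₀ ℝ))

noncomputable instance : LinearOrder (OrderedBy le hle) where
  le := le
  le_refl := hle.1.refl
  le_trans _ _ _ := hle.1.trans _ _ _
  le_antisymm _ _ := hle.1.antisymm _ _
  le_total := hle.1.total
  toDecidableLE := Classical.decRel _

instance : IsOrderedAddMonoid (OrderedBy le hle) where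
  add_le_add_left x y h z := hle.2.1 x y z h

instance : PosSMulStrictMono ℝ (OrderedBy le hle) :=
  haveI : PosSMulMono ℝ (OrderedBy le hle) :=
    .of_smul_nonneg fun c hc x hx => hle.2.2 c x hc hx
  PosSMulMono.toPosSMulStrictMono

end OrderedBy

noncomputable def toOrderedBy {le : (E →₀ ℝ) → (E →₀ ℝ) → Prop} (hle : IsLinVecOrder le) :
    (E →₀ ℝ) ≃ₗ[ℝ] OrderedBy le hle :=
  LinearEquiv.refl ℝ (E →₀ ℝ)

section VectorSpaceOrder

variable {le : (E →₀ ℝ) → (E →₀ ℝ) → Prop} (hle : IsLinVecOrder le) {a x : E →₀ ℝ}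

theorem toOrderedBy_vabs : toOrderedBy hle (vabs le a) = |toOrderedBy hle a| := by
  unfold vabs
  split_ifs with h
  · exact (abs_of_nonneg h).symm
  · exact (abs_of_neg (not_le.mp h)).symm

theorem toOrderedBy_vabs_nonneg : 0 ≤ toOrderedBy hle (vabs le a) :=
  (toOrderedBy_vabs hle).symm ▸ abs_nonneg _

theorem toOrderedBy_vabs_pos (hb : vabs le a ≠ 0) : 0 < toOrderedBy hle (vabs le a) :=
  (toOrderedBy_vabs_nonneg hle).lt_of_ne' hb

theorem mem_vsub_iff_abs_le :
    x ∈ Vsub le a ↔ ∃ n : ℕ, |toOrderedBy hle x| ≤ (n : ℝ) • toOrderedBy hle (vabs le a) :=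
  show toOrderedBy hle x ∈ span ℝ (Icc 0 (toOrderedBy hle (vabs le a))) ↔ _ from
    mem_span_Icc_zero_iff (toOrderedBy_vabs_nonneg hle)

theorem mem_hsub_iff_smul_le :
    x ∈ Hsub le a ↔ ∀ r : ℝ, r • toOrderedBy hle x ≤ toOrderedBy hle (vabs le a) :=
  show toOrderedBy hle x ∈ span ℝ {y | 0 ≤ y ∧ ∀ n : ℕ, n • y ≤ toOrderedBy hle (vabs le a)} ↔ _
    from mem_span_nsmul_le_iff (toOrderedBy_vabs_nonneg hle)

end VectorSpaceOrder

def ratVecSubmodule (E : Type*) : Submodule ℚ (E →₀ ℝ) where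
  carrier := RatVec E
  add_mem' {x y} hx hy e := by
    obtain ⟨p, hp⟩ := hx e
    obtain ⟨q, hq⟩ := hy e
    exact ⟨p + q, by simp [hp, hq]⟩
  zero_mem' _ := ⟨0, by simp⟩
  smul_mem' c x hx e := by
    obtain ⟨p, hp⟩ := hx e
    exact ⟨c * p, by simp [hp, Rat.smul_def]⟩

theorem ratCast_smul_mem_ratVec {x : E →₀ ℝ} (q : ℚ) (hx : x ∈ RatVec E) :
    (q : ℝ) • x ∈ RatVec E :=
  Rat.cast_smul_eq_qsmul ℝ q x ▸ (ratVecSubmodule E).smul_mem q hx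

theorem actSub_le (W : Submodule ℝ (E →₀ ℝ)) : ActSub W ≤ W :=
  span_le.mpr inter_subset_left

def AgreeOnRatVec (le le' : (E →₀ ℝ) → (E →₀ ℝ) → Prop) : Prop :=
  ∀ x ∈ RatVec E, (le 0 x ↔ le' 0 x)

theorem vabs_mem_ratVec {le : (E →₀ ℝ) → (E →₀ ℝ) → Prop} {a : E →₀ ℝ} (ha : a ∈ RatVec E) :
    vabs le a ∈ RatVec E := by
  unfold vabs
  split_ifs
  exacts [ha, (ratVecSubmodule E).neg_mem ha]

namespace AgreeOnRatVec

variable {le le' : (E →₀ ℝ) → (E →₀ ℝ) → Prop} {a b x u v : E →₀ ℝ} {t : ℝ}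

theorem vabs_eq (h : AgreeOnRatVec le le') (ha : a ∈ RatVec E) : vabs le a = vabs le' a := by
  unfold vabs
  congr 1
  exact propext (h a ha)

theorem toOrderedBy_le_iff (hle : IsLinVecOrder le) (hle' : IsLinVecOrder le')
    (h : AgreeOnRatVec le le') (hu : u ∈ RatVec E) (hv : v ∈ RatVec E) :
    toOrderedBy hle u ≤ toOrderedBy hle v ↔ toOrderedBy hle' u ≤ toOrderedBy hle' v := by
  rw [← sub_nonneg, ← map_sub, ← sub_nonneg (a := toOrderedBy hle' v), ← map_sub]
  exact h _ ((ratVecSubmodule E).sub_mem hv hu)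

theorem mem_vsub_iff (hle : IsLinVecOrder le) (hle' : IsLinVecOrder le')
    (h : AgreeOnRatVec le le') (ha : a ∈ RatVec E) (hx : x ∈ RatVec E) :
    x ∈ Vsub le a ↔ x ∈ Vsub le' a := by
  rw [mem_vsub_iff_abs_le hle, mem_vsub_iff_abs_le hle', ← h.vabs_eq ha]
  refine exists_congr fun n => ?_
  have hn := ratCast_smul_mem_ratVec (n : ℚ) (vabs_mem_ratVec (le := le) ha)
  rw [Rat.cast_natCast] at hn
  simp only [abs_le, ← map_smul, ← map_neg]
  exact and_congr (h.toOrderedBy_le_iff hle hle' ((ratVecSubmodule E).neg_mem hn) hx)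
    (h.toOrderedBy_le_iff hle hle' hx hn)

theorem isStdPart_iff (hle : IsLinVecOrder le) (hle' : IsLinVecOrder le')
    (h : AgreeOnRatVec le le') (hb : b ∈ RatVec E) (hb0 : le 0 b) (hx : x ∈ RatVec E) :
    IsStdPart (toOrderedBy hle b) (toOrderedBy hle x) t ↔
      IsStdPart (toOrderedBy hle' b) (toOrderedBy hle' x) t := by
  rw [isStdPart_iff_rat (hb0 : 0 ≤ toOrderedBy hle b),
    isStdPart_iff_rat ((h b hb).mp hb0 : 0 ≤ toOrderedBy hle' b)]
  simp only [← map_smul]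
  exact and_congr
    (forall₂_congr fun q _ => h.toOrderedBy_le_iff hle hle' (ratCast_smul_mem_ratVec q hb) hx)
    (forall₂_congr fun q _ => h.toOrderedBy_le_iff hle hle' hx (ratCast_smul_mem_ratVec q hb))

theorem exists_isStdPart_of_mem_actSub (hle : IsLinVecOrder le) (hle' : IsLinVecOrder le')
    (h : AgreeOnRatVec le le') (ha : a ∈ RatVec E) (hb : vabs le a ≠ 0)
    (hx : x ∈ ActSub (Vsub le a)) :
    ∃ t, IsStdPart (toOrderedBy hle (vabs le a)) (toOrderedBy hle x) t ∧
      IsStdPart (toOrderedBy hle' (vabs le a)) (toOrderedBy hle' x) t := by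
  have hpos := toOrderedBy_vabs_pos hle hb
  have hnonneg' : 0 ≤ toOrderedBy hle' (vabs le a) :=
    h.vabs_eq ha ▸ toOrderedBy_vabs_nonneg hle'
  induction hx using Submodule.span_induction with
  | mem y hy =>
    obtain ⟨t, ht⟩ := exists_isStdPart hpos ((mem_vsub_iff_abs_le hle).mp hy.1)
    exact ⟨t, ht, (h.isStdPart_iff hle hle' (vabs_mem_ratVec ha) hpos.le hy.2).mp ht⟩
  | zero => exact ⟨0, by simpa using IsStdPart.zero hpos.le, by simpa using IsStdPart.zero hnonneg'⟩
  | add y z _ _ hy hz =>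
    obtain ⟨s, hs, hs'⟩ := hy
    obtain ⟨t, ht, ht'⟩ := hz
    exact ⟨s + t, by simpa using hs.add ht, by simpa using hs'.add ht'⟩
  | smul c y _ hy =>
    obtain ⟨t, ht, ht'⟩ := hy
    exact ⟨c * t, by simpa using ht.smul hpos.le c, by simpa using ht'.smul hnonneg' c⟩

theorem mem_hsub_iff_of_mem_actSub (hle : IsLinVecOrder le) (hle' : IsLinVecOrder le')
    (h : AgreeOnRatVec le le') (ha : a ∈ RatVec E) (hx : x ∈ ActSub (Vsub le a)) :
    x ∈ Hsub le a ↔ x ∈ Hsub le' a := by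
  rcases eq_or_ne (vabs le a) 0 with hb | hb
  · obtain ⟨n, hn⟩ := (mem_vsub_iff_abs_le hle).mp (actSub_le _ hx)
    rw [hb, map_zero, smul_zero, abs_nonpos_iff,
      map_eq_zero_iff _ (toOrderedBy hle).injective] at hn
    simp only [hn, zero_mem]
  · obtain ⟨t, ht, ht'⟩ := h.exists_isStdPart_of_mem_actSub hle hle' ha hb hx
    have hpos := toOrderedBy_vabs_pos hle hb
    have hpos' : 0 < toOrderedBy hle' (vabs le a) :=
      h.vabs_eq ha ▸ toOrderedBy_vabs_pos hle' (h.vabs_eq ha ▸ hb)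
    rw [mem_hsub_iff_smul_le hle, mem_hsub_iff_smul_le hle', ← h.vabs_eq ha,
      ← isStdPart_zero_iff hpos.le, ← isStdPart_zero_iff hpos'.le]
    exact ⟨fun h0 => ht.eq hpos h0 ▸ ht', fun h0 => ht'.eq hpos' h0 ▸ ht⟩

theorem actSub_vsub_eq (hle : IsLinVecOrder le) (hle' : IsLinVecOrder le')
    (h : AgreeOnRatVec le le') (ha : a ∈ RatVec E) :
    ActSub (Vsub le a) = ActSub (Vsub le' a) :=
  congrArg (span ℝ) (Set.ext fun _ => and_congr_left (h.mem_vsub_iff hle hle' ha))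

theorem hsub_inf_actSub_eq (hle : IsLinVecOrder le) (hle' : IsLinVecOrder le')
    (h : AgreeOnRatVec le le') (ha : a ∈ RatVec E) :
    Hsub le a ⊓ ActSub (Vsub le a) = Hsub le' a ⊓ ActSub (Vsub le' a) := by
  rw [← h.actSub_vsub_eq hle hle' ha]
  ext x
  exact and_congr_left (h.mem_hsub_iff_of_mem_actSub hle hle' ha)

end AgreeOnRatVec

end LinVecOrder

/-- if `Act(V_a) ≠ Act(V′_a)` or `H_a ∩ Act(V_a) ≠ H′_a ∩ Act(V′_a)` for a
rational vector `a`, then the two linear vector-space orders differ on the rational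
vectors. -/
theorem stmt16 {E : Type*}
    (le le' : (E →₀ ℝ) → (E →₀ ℝ) → Prop)
    (hle : IsLinVecOrder le) (hle' : IsLinVecOrder le')
    (a : E →₀ ℝ) (ha : a ∈ RatVec E)
    (h : ActSub (Vsub le a) ≠ ActSub (Vsub le' a) ∨
      Hsub le a ⊓ ActSub (Vsub le a) ≠ Hsub le' a ⊓ ActSub (Vsub le' a)) :
    ∃ x ∈ RatVec E, ¬ (le 0 x ↔ le' 0 x) := by
  contrapose! h
  exact ⟨AgreeOnRatVec.actSub_vsub_eq hle hle' h ha,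
    AgreeOnRatVec.hsub_inf_actSub_eq hle hle' h ha⟩
end

section
/- Let ≤ and ≤′ be two linear vector-space orders on the real vector space ⊕_E ℝ, and let a be a rational vector with 0 ≤ a and 0 ≤′ a. Let V_a, H_a be taken with respect to ≤ and V′_a, H′_a with respect to ≤′, and assume H_a = H′_a. Then the induced orders on V_a ∩ (rational vectors) are identical (for every rational vector x ∈ V_a ∪ V′_a one has 0 ≤ x iff 0 ≤′ x) if and only if the induced orders on H_a ∩ (rational vectors) are identical (for every rational vector x ∈ H_a one has 0 ≤ x iff 0 ≤′ x). -/
/-!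
Regard `⊕_E ℝ` with the order `≤` as an ordered real vector space. For `a > 0`, `H_a` is the set
of elements infinitesimal with respect to `a` (Archimedean class strictly above that of `a`),
while every element of `V_a` is bounded by a multiple of `a`. Such an `x` is `r • a` plus an
infinitesimal, with `r = sup {r | r • a ≤ x}`: if `r ≠ 0` the sign of `x` is the sign of `r` in
every order for which `a > 0` and `x - r • a` is infinitesimal, so in both `≤` and `≤′` since
`H_a = H′_a`; if `r = 0` then `x ∈ H_a`. Conversely `H_a ⊆ V_a`.
-/

open ArchimedeanClass Submodule

namespace ArchimedeanClass

variable {M : Type*} [AddCommGroup M] [LinearOrder M] [IsOrderedAddMonoid M] {a x : M}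

section ArchimedeanScalars

variable {K : Type*} [Ring K] [LinearOrder K] [IsOrderedRing K] [Archimedean K] [Module K M]
  [PosSMulMono K M]

theorem mk_le_mk_of_mem_span_Icc (hx : x ∈ span K (Set.Icc 0 a)) :
    mk a ≤ mk x := by
  induction hx using Submodule.span_induction with
  | mem y hy => exact mk_le_mk_of_abs ((abs_of_nonneg hy.1).trans_le (hy.2.trans (le_abs_self a)))
  | zero => simp
  | add y z _ _ hy hz => exact (le_min hy hz).trans (min_le_mk_add y z)
  | smul r y _ hy => exact hy.trans (mk_le_mk_smul y r)

theorem mem_span_nsmul_le_iff (ha : 0 < a) :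
    x ∈ span K {y | 0 ≤ y ∧ ∀ n : ℕ, n • y ≤ a} ↔ mk a < mk x := by
  constructor
  · intro hx
    induction hx using Submodule.span_induction with
    | mem y hy =>
      rw [mk_lt_mk, abs_of_pos ha, abs_of_nonneg hy.1]
      intro n
      rcases hy.1.eq_or_lt with rfl | hy0
      · simpa using ha
      · exact (nsmul_lt_nsmul_left hy0 n.lt_succ_self).trans_le (hy.2 (n + 1))
    | zero => simpa [lt_top_iff_ne_top] using ha.ne'
    | add y z _ _ hy hz => exact (lt_min hy hz).trans_le (min_le_mk_add y z)
    | smul r y _ hy => exact hy.trans_le (mk_le_mk_smul y r)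
  · intro hx
    have habs : |x| ∈ span K {y | 0 ≤ y ∧ ∀ n : ℕ, n • y ≤ a} :=
      subset_span ⟨abs_nonneg x, fun n => by simpa [abs_of_pos ha] using (mk_lt_mk.1 hx n).le⟩
    rcases abs_choice x with h | h
    · rwa [h] at habs
    · simpa [h] using neg_mem habs

end ArchimedeanScalars

variable [Module ℝ M] [PosSMulStrictMono ℝ M]

theorem mk_lt_mk_of_abs_le_smul (ha : 0 < a)
    (hx : ∀ ε : ℝ, 0 < ε → |x| ≤ ε • a) : mk a < mk x := by
  rw [mk_lt_mk, abs_of_pos ha]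
  intro n
  calc n • |x| ≤ n • ((1 / (n + 1) : ℝ) • a) := nsmul_le_nsmul_right (hx _ (by positivity)) n
    _ = (n / (n + 1) : ℝ) • a := by rw [← Nat.cast_smul_eq_nsmul ℝ, smul_smul, mul_one_div]
    _ < a := smul_lt_of_lt_one_left ha ((div_lt_one (by positivity)).2 (by linarith))

/-- The multiple is `r = sSup {r | r • a ≤ x}`. -/
theorem exists_mk_lt_mk_sub_smul (ha : 0 < a) (hx : mk a ≤ mk x) :
    ∃ r : ℝ, mk a < mk (x - r • a) := by
  obtain ⟨n, hn⟩ := mk_le_mk.1 hx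
  rw [abs_of_pos ha, ← Nat.cast_smul_eq_nsmul ℝ] at hn
  set S := {r : ℝ | r • a ≤ x}
  have hS : S.Nonempty := ⟨-n, show (-n : ℝ) • a ≤ x by rw [neg_smul]; exact neg_le_of_abs_le hn⟩
  have hSbdd : BddAbove S :=
    ⟨n, fun r hr => (smul_le_smul_iff_of_pos_right ha).1 (hr.trans (le_of_abs_le hn))⟩
  refine ⟨sSup S, mk_lt_mk_of_abs_le_smul ha fun ε hε => abs_sub_le_iff.2 ⟨?_, ?_⟩⟩
  · have hε' : sSup S + ε ∉ S := fun h => by linarith [le_csSup hSbdd h]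
    rw [sub_le_iff_le_add, ← add_smul, add_comm ε]
    exact (not_le.1 hε').le
  · obtain ⟨r, hrS, hr⟩ := exists_lt_of_lt_csSup hS (sub_lt_self (sSup S) hε)
    rw [sub_le_comm, ← sub_smul]
    exact (smul_le_smul_of_nonneg_right hr.le ha.le).trans hrS

theorem pos_of_mk_lt_mk_sub_smul {r : ℝ} (ha : 0 < a) (hr : 0 < r)
    (h : mk a < mk (x - r • a)) : 0 < x := by
  rw [← mk_smul a hr.ne', mk_sub_comm] at h
  exact sub_lt_self_iff _ |>.1 (lt_of_mk_lt_mk_of_nonneg h (smul_nonneg hr.le ha.le))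

theorem nonneg_iff_of_mk_lt_mk_sub_smul {r : ℝ} (ha : 0 < a) (hr : r ≠ 0)
    (h : mk a < mk (x - r • a)) : 0 ≤ x ↔ 0 < r := by
  rcases hr.lt_or_gt with hr | hr
  · have hneg : mk a < mk (-x - (-r) • a) := by
      rwa [show -x - (-r) • a = -(x - r • a) by module, mk_neg]
    have := pos_of_mk_lt_mk_sub_smul ha (neg_pos.2 hr) hneg
    exact iff_of_false (neg_pos.1 this).not_ge hr.not_gt
  · exact iff_of_true (pos_of_mk_lt_mk_sub_smul ha hr h).le hr

end ArchimedeanClass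

theorem Hsub_le_Vsub {E : Type*} (le : (E →₀ ℝ) → (E →₀ ℝ) → Prop) (a : E →₀ ℝ) :
    Hsub le a ≤ Vsub le a :=
  span_mono fun y hy => ⟨hy.1, by simpa using hy.2 1⟩

namespace IsLinVecOrder

variable {E : Type*} {le : (E →₀ ℝ) → (E →₀ ℝ) → Prop}

/-- `⊕_E ℝ` as a type carrying the order `le`, so that the theory of ordered modules and of
Archimedean classes applies to it. -/
noncomputable def Carrier (_ : IsLinVecOrder le) : Type _ := E →₀ ℝ

variable (hle : IsLinVecOrder le)

noncomputable instance : AddCommGroup hle.Carrier := inferInstanceAs (AddCommGroup (E →₀ ℝ))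

noncomputable instance : Module ℝ hle.Carrier := inferInstanceAs (Module ℝ (E →₀ ℝ))

noncomputable instance : LinearOrder hle.Carrier where
  le := le
  le_refl := hle.1.refl
  le_trans _ _ _ := hle.1.trans _ _ _
  le_antisymm _ _ := hle.1.antisymm _ _
  le_total := hle.1.total
  toDecidableLE := Classical.decRel _

instance : IsOrderedAddMonoid hle.Carrier where
  add_le_add_left x y h z := hle.2.1 x y z h

instance : PosSMulMono ℝ hle.Carrier := .of_smul_nonneg fun r hr x hx => hle.2.2 r x hr hx

instance : PosSMulStrictMono ℝ hle.Carrier := PosSMulMono.toPosSMulStrictMono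

noncomputable def toCarrier : (E →₀ ℝ) ≃ₗ[ℝ] hle.Carrier := LinearEquiv.refl ℝ (E →₀ ℝ)

variable {a x : E →₀ ℝ}

theorem toCarrier_nonneg : 0 ≤ hle.toCarrier x ↔ le 0 x := Iff.rfl

theorem toCarrier_pos (h0a : le 0 a) (ha : a ≠ 0) : 0 < hle.toCarrier a :=
  lt_of_le_of_ne h0a (Ne.symm ha)

theorem mk_le_mk_of_mem_Vsub (h0a : le 0 a) (hx : x ∈ Vsub le a) :
    mk (hle.toCarrier a) ≤ mk (hle.toCarrier x) := by
  rw [Vsub, vabs, if_pos h0a] at hx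
  refine mk_le_mk_of_mem_span_Icc (K := ℝ) ?_
  exact hx

theorem mem_Hsub_iff (h0a : le 0 a) (ha : a ≠ 0) :
    x ∈ Hsub le a ↔ mk (hle.toCarrier a) < mk (hle.toCarrier x) := by
  rw [Hsub, vabs, if_pos h0a]
  exact mem_span_nsmul_le_iff (K := ℝ) (x := hle.toCarrier x) (hle.toCarrier_pos h0a ha)

end IsLinVecOrder

open IsLinVecOrder in
theorem nonneg_iff_of_mem_Vsub {E : Type*} {le le' : (E →₀ ℝ) → (E →₀ ℝ) → Prop}
    (hle : IsLinVecOrder le) (hle' : IsLinVecOrder le') {a : E →₀ ℝ}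
    (h0a : le 0 a) (h0a' : le' 0 a) (hH : Hsub le a = Hsub le' a)
    (hHsub : ∀ x ∈ RatVec E, x ∈ Hsub le a → (le 0 x ↔ le' 0 x))
    {x : E →₀ ℝ} (hx : x ∈ RatVec E) (hxV : x ∈ Vsub le a) : le 0 x ↔ le' 0 x := by
  rcases eq_or_ne a 0 with rfl | ha
  · have hx0 : x = 0 := by simpa using hle.mk_le_mk_of_mem_Vsub h0a hxV
    subst hx0
    exact hHsub 0 hx (zero_mem _)
  obtain ⟨r, hr⟩ : ∃ r : ℝ, mk (hle.toCarrier a) < mk (hle.toCarrier (x - r • a)) :=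
    exists_mk_lt_mk_sub_smul (hle.toCarrier_pos h0a ha) (hle.mk_le_mk_of_mem_Vsub h0a hxV)
  rcases eq_or_ne r 0 with rfl | hr0
  · exact hHsub x hx ((hle.mem_Hsub_iff h0a ha).2 (by simpa using hr))
  have hr' : mk (hle'.toCarrier a) < mk (hle'.toCarrier (x - r • a)) :=
    (hle'.mem_Hsub_iff h0a' ha).1 (hH ▸ (hle.mem_Hsub_iff h0a ha).2 hr)
  rw [map_sub, map_smul] at hr hr'
  rw [← hle.toCarrier_nonneg, ← hle'.toCarrier_nonneg,
    nonneg_iff_of_mk_lt_mk_sub_smul (hle.toCarrier_pos h0a ha) hr0 hr,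
    nonneg_iff_of_mk_lt_mk_sub_smul (hle'.toCarrier_pos h0a' ha) hr0 hr']

theorem stmt17_general {E : Type*}
    (le le' : (E →₀ ℝ) → (E →₀ ℝ) → Prop)
    (hle : IsLinVecOrder le) (hle' : IsLinVecOrder le')
    (a : E →₀ ℝ)
    (h0a : le 0 a) (h0a' : le' 0 a)
    (hH : Hsub le a = Hsub le' a) :
    (∀ x ∈ RatVec E, (x ∈ Vsub le a ∨ x ∈ Vsub le' a) → (le 0 x ↔ le' 0 x)) ↔
    (∀ x ∈ RatVec E, x ∈ Hsub le a → (le 0 x ↔ le' 0 x)) := by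
  refine ⟨fun hV x hx hxH => hV x hx (.inl (Hsub_le_Vsub le a hxH)), fun hHsub x hx hxV => ?_⟩
  rcases hxV with hxV | hxV
  · exact nonneg_iff_of_mem_Vsub hle hle' h0a h0a' hH hHsub hx hxV
  · refine (nonneg_iff_of_mem_Vsub hle' hle h0a' h0a hH.symm ?_ hx hxV).symm
    exact fun y hy hyH => (hHsub y hy (hH ▸ hyH)).symm

/-- for two linear vector-space orders with `0 ≤ a`, `0 ≤′ a` and the same
hyperplane `H_a = H′_a`, the induced orders agree on the rational vectors of
`V_a ∪ V′_a` iff they agree on the rational vectors of `H_a`. -/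
theorem stmt17 {E : Type*}
    (le le' : (E →₀ ℝ) → (E →₀ ℝ) → Prop)
    (hle : IsLinVecOrder le) (hle' : IsLinVecOrder le')
    (a : E →₀ ℝ) (ha : a ∈ RatVec E)
    (h0a : le 0 a) (h0a' : le' 0 a)
    (hH : Hsub le a = Hsub le' a) :
    (∀ x ∈ RatVec E, (x ∈ Vsub le a ∨ x ∈ Vsub le' a) → (le 0 x ↔ le' 0 x)) ↔
    (∀ x ∈ RatVec E, x ∈ Hsub le a → (le 0 x ↔ le' 0 x)) :=
  stmt17_general le le' hle hle' a h0a h0a' hH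
end

section
/- Let ⊕_E ℝ be the real vector space of finitely supported functions E → ℝ, let H be an ℝ-subspace with a vector a ∉ H such that H + ℝ • a = ⊕_E ℝ, let Q ⊆ H be the positive cone of a linear vector-space order on H, and let ≤ be the linear vector-space order on ⊕_E ℝ with positive cone P := Q ∪ {h + t • a | h ∈ H, t ∈ ℝ, t > 0}. Let S be an additive subgroup of ⊕_E ℝ with S ⊄ H. Then the restriction of ≤ to S is archimedean (for all x, y ∈ S with 0 < x there exists a natural number n with y ≤ n • x) if and only if S ∩ H = {0}. -/
/-- for the linear vector-space order on `⊕_E ℝ` obtained from a linearly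
ordered hyperplane `H` (with positive cone `Q`) and a side vector `a ∉ H`, the
restriction to an additive subgroup `S ⊄ H` is archimedean iff `S ∩ H = {0}`. -/
theorem stmt19 {E : Type*} (H : Submodule ℝ (E →₀ ℝ)) (a : E →₀ ℝ)
    (haH : a ∉ H) (hHa : H ⊔ Submodule.span ℝ {a} = ⊤)
    (Q : Set (E →₀ ℝ)) (hQH : Q ⊆ (H : Set (E →₀ ℝ)))
    (hQadd : ∀ x ∈ Q, ∀ y ∈ Q, x + y ∈ Q)
    (hQsmul : ∀ (α : ℝ), 0 ≤ α → ∀ x ∈ Q, α • x ∈ Q)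
    (hQpure : Q ∩ (-Q) = {0})
    (hQtotal : Q ∪ (-Q) = (H : Set (E →₀ ℝ)))
    (S : AddSubgroup (E →₀ ℝ))
    (hS : ¬ ((S : Set (E →₀ ℝ)) ⊆ (H : Set (E →₀ ℝ)))) :
    let P : Set (E →₀ ℝ) :=
      Q ∪ {x | ∃ h ∈ H, ∃ t : ℝ, 0 < t ∧ x = h + t • a}
    (∀ x ∈ S, ∀ y ∈ S, x ∈ P → x ≠ 0 → ∃ n : ℕ, n • x - y ∈ P) ↔
      (S : Set (E →₀ ℝ)) ∩ (H : Set (E →₀ ℝ)) = {0} := by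
  intro P
  have decomp : ∀ v : E →₀ ℝ, ∃ h ∈ H, ∃ t : ℝ, v = h + t • a := by
    intro v
    have hv : v ∈ H ⊔ Submodule.span ℝ {a} := by rw [hHa]; exact Submodule.mem_top
    rcases Submodule.mem_sup.mp hv with ⟨h, hh, z, hz, rfl⟩
    rcases Submodule.mem_span_singleton.mp hz with ⟨t, rfl⟩
    exact ⟨h, hh, t, rfl⟩
  constructor
  · intro harch
    ext w
    simp only [Set.mem_inter_iff, Set.mem_singleton_iff, SetLike.mem_coe]
    constructor
    · rintro ⟨hwS, hwH⟩
      by_contra hw0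
      -- find x ∈ S ∩ Q, x ≠ 0
      have hwQ : w ∈ Q ∪ (-Q) := by rw [hQtotal]; exact hwH
      obtain ⟨x, hxS, hxQ, hx0⟩ : ∃ x, x ∈ S ∧ x ∈ Q ∧ x ≠ 0 := by
        rcases hwQ with h | h
        · exact ⟨w, hwS, h, hw0⟩
        · exact ⟨-w, neg_mem hwS, Set.mem_neg.mp h, neg_ne_zero.mpr hw0⟩
      -- find y ∈ S with y = hy + s • a, s > 0
      rw [Set.not_subset] at hS
      obtain ⟨z, hzS, hzH⟩ := hS
      obtain ⟨hz, hzmem, t, hzeq⟩ := decomp z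
      have ht0 : t ≠ 0 := by
        rintro rfl
        apply hzH
        rw [hzeq]
        simpa using hzmem
      obtain ⟨y, hyS, hy, hymem, s, hs0, hyeq⟩ :
          ∃ y, y ∈ S ∧ ∃ hy ∈ H, ∃ s : ℝ, 0 < s ∧ y = hy + s • a := by
        rcases lt_or_gt_of_ne ht0 with h | h
        · refine ⟨-z, neg_mem hzS, -hz, neg_mem hzmem, -t, by linarith, ?_⟩
          rw [hzeq]; module
        · exact ⟨z, hzS, hz, hzmem, t, h, hzeq⟩
      obtain ⟨n, hn⟩ := harch x hxS y hyS (Or.inl hxQ) hx0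
      -- derive a ∈ H, contradiction
      have hxH : x ∈ H := hQH hxQ
      have hnx : (n : ℝ) • x - hy ∈ H := sub_mem (H.smul_mem _ hxH) hymem
      rcases hn with hmem | ⟨h', hh', t', ht', heq⟩
      · have : n • x - y ∈ H := hQH hmem
        have : (s)⁻¹ • (((n : ℝ) • x - hy) - (n • x - y)) ∈ H :=
          H.smul_mem _ (sub_mem hnx this)
        apply haH
        have ha : (s)⁻¹ • (((n : ℝ) • x - hy) - (n • x - y)) = a := by
          have key : ((n : ℝ) • x - hy) - (n • x - y) = s • a := by
            rw [hyeq, Nat.cast_smul_eq_nsmul]; abel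
          rw [key, smul_smul, inv_mul_cancel₀ (ne_of_gt hs0), one_smul]
        rwa [ha] at this
      · apply haH
        have hsum : ((s + t')⁻¹) • (((n : ℝ) • x - hy) - h') ∈ H :=
          H.smul_mem _ (sub_mem hnx hh')
        have ha : ((s + t')⁻¹) • (((n : ℝ) • x - hy) - h') = a := by
          have hx : n • x - y = h' + t' • a := heq
          rw [hyeq, (Nat.cast_smul_eq_nsmul ℝ n x).symm] at hx
          have hne : s + t' ≠ 0 := by positivity
          have key : ((n : ℝ) • x - hy) - h' = (s + t') • a := by
            have := hx
            rw [add_smul]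
            linear_combination (norm := module) this
          rw [key, smul_smul, inv_mul_cancel₀ hne, one_smul]
        rwa [ha] at hsum
    · rintro rfl
      exact ⟨zero_mem S, zero_mem H⟩
  · intro hSH x hxS y hyS hxP hx0
    have hxH : x ∉ H := by
      intro h
      apply hx0
      have : x ∈ (S : Set (E →₀ ℝ)) ∩ (H : Set (E →₀ ℝ)) := ⟨hxS, h⟩
      rwa [hSH, Set.mem_singleton_iff] at this
    rcases hxP with hq | ⟨h, hh, t, ht, hxeq⟩
    · exact absurd (hQH hq) hxH
    obtain ⟨hy, hymem, s, hyeq⟩ := decomp y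
    obtain ⟨n, hn⟩ := exists_nat_gt (s / t)
    refine ⟨n, Or.inr ⟨(n : ℝ) • h - hy, sub_mem (H.smul_mem _ hh) hymem,
      (n : ℝ) * t - s, ?_, ?_⟩⟩
    · have : s / t < n := hn
      rw [div_lt_iff₀ ht] at this
      linarith
    · rw [hxeq, hyeq, (Nat.cast_smul_eq_nsmul ℝ n _).symm]
      module
end
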